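/- arXiv:2502.07329 — 8 statements merged into one kernel-verified Lean document; each statement's English description precedes it below -/
import Mathlib

section
/- Let a > 0, b > 0, g ∈ ℝ, c ∈ ℝ and w > 0 with |c| < w^a. Then the Laplace transform ∫_0^∞ e^{-wt} t^{b-1} E_{a,b}^{g}(c t^a) dt equals w^{ag-b} (w^a - c)^{-g}. -/
/-!
Expand the Mittag-Leffler function into its defining series and integrate term by term: the
Gamma integral turns the `k`-th term into `w^(-b) (g)_k (c w^(-a))^k / k!`, so the Laplace
transform is `w^(-b)` times the binomial series `∑ (g)_k x^k / k! = (1 - x)^(-g)` at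
`x = c w^(-a)`, which converges absolutely since `|c| < w^a`. Absolute convergence is also what
justifies exchanging sum and integral, because the integrand's absolute value is the same
expression with `c` replaced by `|c|`.
-/

open MeasureTheory Real

/-- Pochhammer symbol `(g)_k = g (g+1) ⋯ (g+k-1)`. -/
noncomputable def poch (g : ℝ) (k : ℕ) : ℝ := ∏ i ∈ Finset.range k, (g + i)

/-- Three-parameter (Prabhakar) Mittag-Leffler function. -/
noncomputable def ml3 (a b g x : ℝ) : ℝ :=
  ∑' k : ℕ, poch g k * x ^ k / (Real.Gamma ((k : ℝ) * a + b) * (Nat.factorial k : ℝ))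

open Nat Set

lemma poch_eq_eval_ascPochhammer (g : ℝ) (k : ℕ) : poch g k = (ascPochhammer ℝ k).eval g := by
  induction k with
  | zero => simp [poch]
  | succ k ih => rw [poch, Finset.prod_range_succ, ← poch, ih, ascPochhammer_succ_eval]

lemma ringChoose_add_sub_one (g : ℝ) (k : ℕ) : Ring.choose (g + k - 1) k = poch g k / k ! := by
  rw [Ring.choose_eq_smul, Polynomial.descPochhammer_smeval_eq_ascPochhammer,
    Polynomial.ascPochhammer_smeval_eq_eval, poch_eq_eval_ascPochhammer, smul_eq_mul]
  ring_nf

lemma hasSum_poch_mul_pow_div_factorial (g : ℝ) {x : ℝ} (hx : |x| < 1) :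
    HasSum (fun k => poch g k * x ^ k / k !) ((1 - x) ^ (-g)) := by
  have hx' : x ∈ Metric.eball (0 : ℝ) 1 := by simpa [enorm_eq_nnnorm, ← NNReal.coe_lt_coe] using hx
  have := (Real.one_div_one_sub_rpow_hasFPowerSeriesOnBall_zero g).hasSum hx'
  simp only [FormalMultilinearSeries.ofScalars_apply_eq, ringChoose_add_sub_one, smul_eq_mul,
    zero_add] at this
  rw [Real.rpow_neg (by linarith [le_abs_self x]), ← one_div]
  simpa only [div_mul_eq_mul_div] using this

lemma summable_abs_poch_mul_pow_div_factorial (g : ℝ) {x : ℝ} (hx : |x| < 1) :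
    Summable (fun k => |poch g k * x ^ k / (k ! : ℝ)|) := by
  have hx' : x ∈ Metric.eball (0 : ℝ) 1 := by simpa [enorm_eq_nnnorm, ← NNReal.coe_lt_coe] using hx
  have := FormalMultilinearSeries.summable_norm_apply _
    (Metric.eball_subset_eball (Real.one_div_one_sub_rpow_hasFPowerSeriesOnBall_zero g).r_le hx')
  simp only [FormalMultilinearSeries.ofScalars_apply_eq, ringChoose_add_sub_one, smul_eq_mul,
    Real.norm_eq_abs] at this
  convert this using 2 with k
  ring_nf

lemma mul_ml3 (a b g p y : ℝ) :
    p * ml3 a b g y = ∑' k : ℕ, poch g k / k ! * (p * y ^ k / Gamma (k * a + b)) := by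
  rw [ml3, ← tsum_mul_left]
  congr 1 with k
  ring

lemma rpow_sub_one_mul_pow_rpow {t : ℝ} (ht : 0 < t) (a b : ℝ) (k : ℕ) :
    t ^ (b - 1) * (t ^ a) ^ k = t ^ (k * a + b - 1) := by
  rw [← rpow_natCast, ← rpow_mul ht.le, ← rpow_add ht]
  ring_nf

section Laplace

variable {a b w : ℝ}

lemma exp_mul_rpow_mul_pow_div_Gamma_eqOn (c : ℝ) (k : ℕ) :
    EqOn (fun t => exp (-w * t) * t ^ (b - 1) * (c * t ^ a) ^ k / Gamma (k * a + b))
      (fun t => c ^ k / Gamma (k * a + b) * (t ^ (k * a + b - 1) * exp (-(w * t)))) (Ioi 0) := by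
  intro t ht
  simp only [mul_pow, ← rpow_sub_one_mul_pow_rpow (mem_Ioi.mp ht), neg_mul]
  ring

lemma integrableOn_exp_mul_rpow_mul_pow_div_Gamma (ha : 0 ≤ a) (hb : 0 < b) (hw : 0 < w)
    (c : ℝ) (k : ℕ) :
    IntegrableOn (fun t => exp (-w * t) * t ^ (b - 1) * (c * t ^ a) ^ k / Gamma (k * a + b))
      (Ioi 0) := by
  refine IntegrableOn.congr_fun ?_ (exp_mul_rpow_mul_pow_div_Gamma_eqOn c k).symm measurableSet_Ioi
  have hs : -1 < k * a + b - 1 := by linarith [mul_nonneg k.cast_nonneg ha]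
  have := integrableOn_rpow_mul_exp_neg_mul_rpow (p := 1) hs one_pos hw
  simp only [rpow_one, neg_mul] at this
  exact this.const_mul _

lemma integral_exp_mul_rpow_mul_pow_div_Gamma (ha : 0 ≤ a) (hb : 0 < b) (hw : 0 < w)
    (c : ℝ) (k : ℕ) :
    ∫ t in Ioi 0, exp (-w * t) * t ^ (b - 1) * (c * t ^ a) ^ k / Gamma (k * a + b)
      = w ^ (-b) * (c * w ^ (-a)) ^ k := by
  have hs : 0 < k * a + b := by positivity
  rw [setIntegral_congr_fun measurableSet_Ioi (exp_mul_rpow_mul_pow_div_Gamma_eqOn c k),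
    integral_const_mul, integral_rpow_mul_exp_neg_mul_Ioi hs hw, one_div, inv_rpow hw.le,
    ← rpow_neg hw.le, mul_pow, ← rpow_natCast (w ^ (-a)), ← rpow_mul hw.le]
  rw [show -(k * a + b) = -b + -a * k by ring, rpow_add hw]
  field_simp [(Gamma_pos_of_pos hs).ne']

lemma abs_exp_mul_rpow_mul_pow_div_Gamma (ha : 0 ≤ a) (hb : 0 < b) {t : ℝ} (ht : 0 < t)
    (c : ℝ) (k : ℕ) :
    |exp (-w * t) * t ^ (b - 1) * (c * t ^ a) ^ k / Gamma (k * a + b)|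
      = exp (-w * t) * t ^ (b - 1) * (|c| * t ^ a) ^ k / Gamma (k * a + b) := by
  have hs : 0 < k * a + b := by positivity
  rw [abs_div, abs_mul, abs_mul, abs_pow, abs_mul, abs_of_pos (exp_pos _),
    abs_of_pos (rpow_pos_of_pos ht _), abs_of_pos (rpow_pos_of_pos ht _),
    abs_of_pos (Gamma_pos_of_pos hs)]

end Laplace

lemma rpow_neg_mul_one_sub_mul_rpow_neg {a b c g w : ℝ} (hw : 0 < w) (hc : c < w ^ a) :
    w ^ (-b) * (1 - c * w ^ (-a)) ^ (-g) = w ^ (a * g - b) * (w ^ a - c) ^ (-g) := by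
  have hwa : 0 < w ^ (-a) := rpow_pos_of_pos hw _
  rw [show 1 - c * w ^ (-a) = (w ^ a - c) * w ^ (-a) by rw [rpow_neg hw.le]; field_simp,
    mul_rpow (by linarith) hwa.le, ← rpow_mul hw.le, sub_eq_neg_add (a * g), rpow_add hw]
  ring_nf

theorem stmt0 (a b g c w : ℝ) (ha : 0 < a) (hb : 0 < b) (hw : 0 < w)
    (hc : |c| < w ^ a) :
    ∫ t in Set.Ioi (0 : ℝ), Real.exp (-w * t) * t ^ (b - 1) * ml3 a b g (c * t ^ a)
      = w ^ (a * g - b) * (w ^ a - c) ^ (-g) := by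
  set x := c * w ^ (-a)
  have hx : |x| < 1 := by
    rwa [abs_mul, abs_of_pos (rpow_pos_of_pos hw _), rpow_neg hw.le, ← div_eq_mul_inv,
      div_lt_one (rpow_pos_of_pos hw _)]
  set F : ℕ → ℝ → ℝ := fun k t =>
    poch g k / k ! * (exp (-w * t) * t ^ (b - 1) * (c * t ^ a) ^ k / Gamma (k * a + b))
  have hF_int : ∀ k, Integrable (F k) (volume.restrict (Ioi 0)) := fun k =>
    (integrableOn_exp_mul_rpow_mul_pow_div_Gamma ha.le hb hw c k).const_mul _
  have hF_integral : ∀ k, ∫ t in Ioi 0, F k t = w ^ (-b) * (poch g k * x ^ k / k !) := by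
    intro k
    rw [integral_const_mul, integral_exp_mul_rpow_mul_pow_div_Gamma ha.le hb hw]
    ring
  have hF_norm : ∀ k, ∫ t in Ioi 0, ‖F k t‖ = w ^ (-b) * |poch g k * x ^ k / k !| := by
    intro k
    rw [setIntegral_congr_fun measurableSet_Ioi fun t ht => by
      rw [norm_mul, norm_eq_abs, norm_eq_abs, abs_exp_mul_rpow_mul_pow_div_Gamma ha.le hb ht],
      integral_const_mul, integral_exp_mul_rpow_mul_pow_div_Gamma ha.le hb hw, abs_div, abs_div,
      abs_mul, abs_pow, abs_mul, abs_of_pos (rpow_pos_of_pos hw (-a))]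
    ring
  have hsummable : Summable fun k => ∫ t in Ioi 0, ‖F k t‖ := by
    simpa only [hF_norm] using (summable_abs_poch_mul_pow_div_factorial g hx).mul_left (w ^ (-b))
  rw [setIntegral_congr_fun measurableSet_Ioi fun t _ => mul_ml3 a b g _ _,
    ← integral_tsum_of_summable_integral_norm hF_int hsummable, tsum_congr hF_integral,
    tsum_mul_left, (hasSum_poch_mul_pow_div_factorial g hx).tsum_eq]
  exact rpow_neg_mul_one_sub_mul_rpow_neg hw ((le_abs_self c).trans_lt hc)
end

section
/- Let 0 < α ≤ 1, 0 < ρ < 1, β > 0, γ ≥ 0, and let f : [0,∞) → ℝ be continuously differentiable with f and f' of at most exponential growth. Define the regularized Hilfer–Prabhakar derivative of f by (D f)(t) = ∫_0^t (t-s)^{-ρ} E_{α,1-ρ}^{-γ}(-β (t-s)^α) f'(s) ds. Then for every w > 0 with β < w^α and with w large enough that the Laplace transforms of f and f' converge absolutely, ∫_0^∞ e^{-wt} (D f)(t) dt = w^{ρ}(1 + β w^{-α})^{γ} ∫_0^∞ e^{-wt} f(t) dt − w^{ρ-1}(1 + β w^{-α})^{γ} f(0). -/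
open MeasureTheory Real

/-- Regularized Hilfer–Prabhakar derivative of `f`. -/
noncomputable def hpDeriv (α ρ β γ : ℝ) (f : ℝ → ℝ) (t : ℝ) : ℝ :=
  ∫ s in (0 : ℝ)..t, (t - s) ^ (-ρ) * ml3 α (1 - ρ) (-γ) (-β * (t - s) ^ α) * deriv f s

/-!
Write `K(u) = u^{-ρ} E_{α,1-ρ}^{-γ}(-β u^α)`, so that `D f = K ∗ f'` is a convolution on the
half-line and its Laplace transform is the product of those of `K` and `f'`. The latter is
`w L[f](w) - f(0)` (the function `e^{-wt} f(t)` tends to zero, being integrable with integrable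
derivative). For the former, integrate the Mittag-Leffler series term by term with Euler's
integral `∫ u^{s-1} e^{-wu} du = Γ(s) w^{-s}`: the Gamma factors cancel and, since
`(-γ)_k / k! = (-1)^k (γ choose k)`, what remains is `w^{ρ-1}` times the binomial series of
`(1 + x)^γ` at `x = β w^{-α}`, which converges absolutely because `0 < β < w^α`.
-/

open Set Filter

theorem Real.hasSum_choose_mul_pow (a : ℝ) {x : ℝ} (hx : |x| < 1) :
    HasSum (fun n ↦ Ring.choose a n * x ^ n) ((1 + x) ^ a) := by
  have := one_add_rpow_hasFPowerSeriesOnBall_zero (a := a)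
  have h := this.hasSum (y := x) (by simpa [Metric.mem_eball, edist_dist] using hx)
  simpa [binomialSeries, FormalMultilinearSeries.coeff_ofScalars, mul_comm] using h

theorem Real.summable_norm_choose_mul_pow (a : ℝ) {x : ℝ} (hx : |x| < 1) :
    Summable fun n ↦ ‖Ring.choose a n * x ^ n‖ := by
  have h := (binomialSeries ℝ a).summable_norm_apply (x := x) ?_
  · simpa [binomialSeries, FormalMultilinearSeries.coeff_ofScalars, mul_comm] using h
  · refine Metric.eball_subset_eball binomialSeries_radius_ge_one ?_
    simpa [Metric.mem_eball, edist_dist] using hx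

theorem MeasureTheory.integrable_tsum_of_summable_integral_norm {α E : Type*} [MeasurableSpace α]
    {μ : Measure α} [NormedAddCommGroup E] [CompleteSpace E] {F : ℕ → α → E}
    (hF_int : ∀ n, Integrable (F n) μ) (hF_sum : Summable fun n ↦ ∫ a, ‖F n a‖ ∂μ) :
    Integrable (fun a ↦ ∑' n, F n a) μ := by
  have hmeas : ∀ n, AEMeasurable (fun a ↦ ‖F n a‖ₑ) μ := fun n ↦ (hF_int n).1.enorm
  have hfin : ∫⁻ a, ∑' n, ‖F n a‖ₑ ∂μ < ⊤ := by
    rw [lintegral_tsum hmeas]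
    simp_rw [← ofReal_integral_norm_eq_lintegral_enorm (hF_int _)]
    rw [← ENNReal.ofReal_tsum_of_nonneg (fun _ ↦ integral_nonneg fun _ ↦ norm_nonneg _)
      hF_sum]
    exact ENNReal.ofReal_lt_top
  have hsummable : ∀ᵐ a ∂μ, Summable fun n ↦ F n a := by
    filter_upwards [ae_lt_top' (AEMeasurable.tsum hmeas) hfin.ne] with a ha
    have h : Summable fun n ↦ ‖F n a‖₊ := ENNReal.tsum_coe_ne_top_iff_summable.1 ha.ne
    exact (NNReal.summable_coe.2 h).of_norm
  refine ⟨aestronglyMeasurable_of_tendsto_ae atTop (fun n ↦ Finset.aestronglyMeasurable_fun_sum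
    (Finset.range n) fun k _ ↦ (hF_int k).1) ?_, ?_⟩
  · filter_upwards [hsummable] with a ha using ha.hasSum.tendsto_sum_nat
  · exact (lintegral_mono fun a ↦ enorm_tsum_le_tsum_enorm).trans_lt hfin

theorem integrableOn_rpow_sub_one_mul_exp_neg_mul {a r : ℝ} (ha : 0 < a) (hr : 0 < r) :
    IntegrableOn (fun t ↦ t ^ (a - 1) * exp (-(r * t))) (Ioi 0) :=
  Integrable.of_integral_ne_zero <| by
    rw [integral_rpow_mul_exp_neg_mul_Ioi ha hr]
    exact (mul_pos (rpow_pos_of_pos (by positivity) a) (Gamma_pos_of_pos ha)).ne'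

theorem integral_Ioi_exp_neg_mul_mul_deriv {f f' : ℝ → ℝ} {w : ℝ}
    (hf : ∀ t, HasDerivAt f (f' t) t)
    (hLf : IntegrableOn (fun t ↦ exp (-w * t) * f t) (Ioi 0))
    (hLf' : IntegrableOn (fun t ↦ exp (-w * t) * f' t) (Ioi 0)) :
    ∫ t in Ioi 0, exp (-w * t) * f' t = w * (∫ t in Ioi 0, exp (-w * t) * f t) - f 0 := by
  have hderiv : ∀ t, HasDerivAt (fun t ↦ exp (-w * t) * f t)
      (exp (-w * t) * f' t - w * (exp (-w * t) * f t)) t := fun t ↦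
    (((hasDerivAt_id' t).const_mul (-w)).exp.mul (hf t)).congr_deriv (by ring)
  have hint := hLf'.sub (hLf.const_mul w)
  have h : ∫ t in Ioi 0, (exp (-w * t) * f' t - w * (exp (-w * t) * f t)) =
      0 - exp (-w * 0) * f 0 :=
    integral_Ioi_of_hasDerivAt_of_tendsto' (fun t _ ↦ hderiv t) hint
      (tendsto_zero_of_hasDerivAt_of_integrableOn_Ioi (fun t _ ↦ hderiv t) hint hLf)
  rw [integral_sub hLf' (hLf.const_mul w), integral_const_mul] at h
  simp only [mul_zero, exp_zero, one_mul, zero_sub] at h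
  linarith

open Convolution in
theorem integral_Ioi_intervalIntegral_mul_sub {𝕜 : Type*} [RCLike 𝕜] {F G : ℝ → 𝕜}
    (hF : IntegrableOn F (Ioi 0)) (hG : IntegrableOn G (Ioi 0)) :
    ∫ t in Ioi 0, ∫ s in 0..t, F s * G (t - s) =
      (∫ t in Ioi 0, F t) * ∫ t in Ioi 0, G t := by
  have hconv : ∀ t,
      ((Ioi 0).indicator F ⋆[ContinuousLinearMap.mul ℝ 𝕜] (Ioi 0).indicator G) t =
        (Ioi 0).indicator (fun t ↦ ∫ s in 0..t, F s * G (t - s)) t := by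
    intro t
    have hmul : ∀ s, (Ioi 0).indicator F s * (Ioi 0).indicator G (t - s) =
        (Ioo 0 t).indicator (fun s ↦ F s * G (t - s)) s := by
      intro s
      simp only [indicator_apply, mem_Ioi, mem_Ioo, sub_pos]
      split_ifs <;> simp_all
    simp only [convolution_def, ContinuousLinearMap.mul_apply', hmul,
      integral_indicator measurableSet_Ioo]
    by_cases ht : 0 < t
    · rw [indicator_of_mem (mem_Ioi.2 ht), intervalIntegral.integral_of_le ht.le,
        integral_Ioc_eq_integral_Ioo]
    · simp [indicator_of_notMem (notMem_Ioi.2 (not_lt.1 ht)), Ioo_eq_empty ht]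
  rw [← integral_indicator measurableSet_Ioi, ← integral_congr_ae (.of_forall hconv),
    integral_convolution _ ((integrable_indicator_iff measurableSet_Ioi).2 hF)
      ((integrable_indicator_iff measurableSet_Ioi).2 hG),
    integral_indicator measurableSet_Ioi, integral_indicator measurableSet_Ioi]
  rfl

theorem poch_neg_div_factorial (g : ℝ) (k : ℕ) :
    poch (-g) k / k.factorial = (-1) ^ k * Ring.choose g k := by
  have hpoch : poch (-g) k = ∏ j ∈ Finset.range k, -(g - j) :=
    Finset.prod_congr rfl fun j _ ↦ by ring
  rw [hpoch, Finset.prod_neg, Finset.card_range, Ring.choose_eq_smul,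
    ← Polynomial.aeval_eq_smeval, Polynomial.aeval_def, Polynomial.eval₂_eq_eval_map,
    descPochhammer_map, descPochhammer_eval_eq_prod_range, smul_eq_mul]
  ring

noncomputable def prabhakarKernel (α ρ β γ u : ℝ) : ℝ :=
  u ^ (-ρ) * ml3 α (1 - ρ) (-γ) (-β * u ^ α)

section Kernel

variable (α ρ β γ w : ℝ)

noncomputable def prabhakarKernelTerm (k : ℕ) (u : ℝ) : ℝ :=
  poch (-γ) k * (-β) ^ k / (Gamma (k * α + (1 - ρ)) * k.factorial) *
    (u ^ (k * α + (1 - ρ) - 1) * exp (-(w * u)))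

variable {α ρ β γ w}

theorem eqOn_exp_neg_mul_prabhakarKernel_tsum :
    EqOn (fun u ↦ exp (-w * u) * prabhakarKernel α ρ β γ u)
      (fun u ↦ ∑' k, prabhakarKernelTerm α ρ β γ w k u) (Ioi 0) := fun u (hu : 0 < u) ↦ by
  dsimp only
  rw [prabhakarKernel, ml3, ← tsum_mul_left, ← tsum_mul_left]
  refine tsum_congr fun k ↦ ?_
  rw [prabhakarKernelTerm, mul_pow, ← rpow_natCast (u ^ α), ← rpow_mul hu.le,
    show (k : ℝ) * α + (1 - ρ) - 1 = -ρ + α * k by ring, rpow_add hu, neg_mul]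
  ring

theorem integrableOn_prabhakarKernelTerm (hα : 0 ≤ α) (hρ1 : ρ < 1) (hw : 0 < w) (k : ℕ) :
    IntegrableOn (prabhakarKernelTerm α ρ β γ w k) (Ioi 0) :=
  (integrableOn_rpow_sub_one_mul_exp_neg_mul (by positivity) hw).const_mul _

theorem integral_prabhakarKernelTerm (hα : 0 ≤ α) (hρ1 : ρ < 1) (hw : 0 < w) (k : ℕ) :
    ∫ u in Ioi 0, prabhakarKernelTerm α ρ β γ w k u =
      w ^ (ρ - 1) * (Ring.choose γ k * (β * w ^ (-α)) ^ k) := by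
  have hs : 0 < k * α + (1 - ρ) := by positivity
  have hpow : (1 / w) ^ (k * α + (1 - ρ)) = w ^ (ρ - 1) * (w ^ (-α)) ^ k := by
    rw [one_div, inv_rpow hw.le, ← rpow_neg hw.le, ← rpow_natCast, ← rpow_mul hw.le,
      ← rpow_add hw]
    ring_nf
  have hchoose : poch (-γ) k = k.factorial * ((-1) ^ k * Ring.choose γ k) := by
    rw [← poch_neg_div_factorial]
    field_simp
  have hsign : ((-1 : ℝ) ^ k) ^ 2 = 1 := by rw [← pow_mul, pow_mul', neg_one_sq, one_pow]
  simp only [prabhakarKernelTerm]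
  rw [integral_const_mul, integral_rpow_mul_exp_neg_mul_Ioi hs hw, hpow, hchoose,
    neg_eq_neg_one_mul β, mul_pow]
  field_simp
  rw [hsign]
  ring

theorem integral_norm_prabhakarKernelTerm (k : ℕ) :
    ∫ u in Ioi 0, ‖prabhakarKernelTerm α ρ β γ w k u‖ =
      ‖∫ u in Ioi 0, prabhakarKernelTerm α ρ β γ w k u‖ := by
  have hnonneg : ∀ u ∈ Ioi (0 : ℝ), 0 ≤ u ^ (k * α + (1 - ρ) - 1) * exp (-(w * u)) :=
    fun u hu ↦ mul_nonneg (rpow_nonneg (le_of_lt hu) _) (exp_nonneg _)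
  simp only [prabhakarKernelTerm]
  rw [setIntegral_congr_fun measurableSet_Ioi
      fun u hu ↦ by rw [norm_mul, norm_of_nonneg (hnonneg u hu)],
    integral_const_mul, integral_const_mul, norm_mul,
    norm_of_nonneg (setIntegral_nonneg measurableSet_Ioi hnonneg)]

theorem summable_integral_norm_prabhakarKernelTerm (hα : 0 ≤ α) (hρ1 : ρ < 1) (hw : 0 < w)
    (hx : |β * w ^ (-α)| < 1) :
    Summable fun k ↦ ∫ u in Ioi 0, ‖prabhakarKernelTerm α ρ β γ w k u‖ := by
  simp_rw [integral_norm_prabhakarKernelTerm, integral_prabhakarKernelTerm hα hρ1 hw,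
    norm_mul (w ^ (ρ - 1)), norm_of_nonneg (rpow_nonneg hw.le _)]
  exact (summable_norm_choose_mul_pow γ hx).mul_left _

theorem integrableOn_exp_neg_mul_prabhakarKernel (hα : 0 ≤ α) (hρ1 : ρ < 1) (hw : 0 < w)
    (hx : |β * w ^ (-α)| < 1) :
    IntegrableOn (fun u ↦ exp (-w * u) * prabhakarKernel α ρ β γ u) (Ioi 0) :=
  IntegrableOn.congr_fun (integrable_tsum_of_summable_integral_norm
      (integrableOn_prabhakarKernelTerm hα hρ1 hw)
      (summable_integral_norm_prabhakarKernelTerm hα hρ1 hw hx))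
    eqOn_exp_neg_mul_prabhakarKernel_tsum.symm measurableSet_Ioi

theorem integral_exp_neg_mul_prabhakarKernel (hα : 0 ≤ α) (hρ1 : ρ < 1) (hw : 0 < w)
    (hx : |β * w ^ (-α)| < 1) :
    ∫ u in Ioi 0, exp (-w * u) * prabhakarKernel α ρ β γ u =
      w ^ (ρ - 1) * (1 + β * w ^ (-α)) ^ γ := by
  rw [setIntegral_congr_fun measurableSet_Ioi eqOn_exp_neg_mul_prabhakarKernel_tsum]
  refine (hasSum_integral_of_summable_integral_norm (integrableOn_prabhakarKernelTerm hα hρ1 hw)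
    (summable_integral_norm_prabhakarKernelTerm hα hρ1 hw hx)).unique ?_
  simp_rw [integral_prabhakarKernelTerm hα hρ1 hw]
  exact (hasSum_choose_mul_pow γ hx).mul_left _

end Kernel

theorem exp_neg_mul_hpDeriv (α ρ β γ w : ℝ) (f : ℝ → ℝ) (t : ℝ) :
    exp (-w * t) * hpDeriv α ρ β γ f t =
      ∫ s in 0..t, exp (-w * s) * deriv f s *
        (exp (-w * (t - s)) * prabhakarKernel α ρ β γ (t - s)) := by
  rw [hpDeriv, ← intervalIntegral.integral_const_mul]
  refine intervalIntegral.integral_congr fun s _ ↦ ?_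
  rw [prabhakarKernel, show -w * t = -w * s + -w * (t - s) by ring, exp_add]
  ring

theorem stmt2_general (α ρ β γ : ℝ) (hα : 0 < α) (hρ1 : ρ < 1)
    (hβ : 0 < β) (f : ℝ → ℝ) (hf : ContDiff ℝ 1 f) :
    ∀ w > (0 : ℝ), β < w ^ α →
      IntegrableOn (fun t => Real.exp (-w * t) * f t) (Set.Ioi 0) →
      IntegrableOn (fun t => Real.exp (-w * t) * deriv f t) (Set.Ioi 0) →
      ∫ t in Set.Ioi (0 : ℝ), Real.exp (-w * t) * hpDeriv α ρ β γ f t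
        = w ^ ρ * (1 + β * w ^ (-α)) ^ γ *
            (∫ t in Set.Ioi (0 : ℝ), Real.exp (-w * t) * f t)
          - w ^ (ρ - 1) * (1 + β * w ^ (-α)) ^ γ * f 0 := by
  intro w hw hβw hLf hLf'
  have hx : |β * w ^ (-α)| < 1 := by
    rw [abs_of_pos (by positivity), rpow_neg hw.le, ← div_eq_mul_inv,
      div_lt_one (rpow_pos_of_pos hw α)]
    exact hβw
  have hf' : ∀ t, HasDerivAt f (deriv f t) t :=
    fun t ↦ (hf.differentiable one_ne_zero t).hasDerivAt
  simp_rw [exp_neg_mul_hpDeriv]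
  rw [integral_Ioi_intervalIntegral_mul_sub hLf'
      (integrableOn_exp_neg_mul_prabhakarKernel hα.le hρ1 hw hx),
    integral_exp_neg_mul_prabhakarKernel hα.le hρ1 hw hx,
    integral_Ioi_exp_neg_mul_mul_deriv hf' hLf hLf', rpow_sub_one hw.ne']
  field_simp

theorem stmt2 (α ρ β γ : ℝ) (hα : 0 < α) (hα1 : α ≤ 1) (hρ : 0 < ρ) (hρ1 : ρ < 1)
    (hβ : 0 < β) (hγ : 0 ≤ γ) (f : ℝ → ℝ) (hf : ContDiff ℝ 1 f)
    (hgrow : ∃ C a : ℝ, ∀ t ≥ (0 : ℝ), |f t| ≤ C * Real.exp (a * t))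
    (hgrow' : ∃ C a : ℝ, ∀ t ≥ (0 : ℝ), |deriv f t| ≤ C * Real.exp (a * t)) :
    ∀ w > (0 : ℝ), β < w ^ α →
      IntegrableOn (fun t => Real.exp (-w * t) * f t) (Set.Ioi 0) →
      IntegrableOn (fun t => Real.exp (-w * t) * deriv f t) (Set.Ioi 0) →
      ∫ t in Set.Ioi (0 : ℝ), Real.exp (-w * t) * hpDeriv α ρ β γ f t
        = w ^ ρ * (1 + β * w ^ (-α)) ^ γ *
            (∫ t in Set.Ioi (0 : ℝ), Real.exp (-w * t) * f t)
          - w ^ (ρ - 1) * (1 + β * w ^ (-α)) ^ γ * f 0 :=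
  stmt2_general α ρ β γ hα hρ1 hβ f hf
end

section
/- Let λ > 0, μ > 0 with λ ≠ μ, let 0 < ρ ≤ 1 and t ≥ 0. Then 2λ Σ_{k=0}^∞ Σ_{r=0}^∞ 2^r (λ−μ)^{k+r} t^{(k+r+1)ρ} / Γ((k+r+1)ρ + 1) = (2λ/(λ−μ)) ( E_{ρ,1}(2(λ−μ) t^ρ) − E_{ρ,1}((λ−μ) t^ρ) ), where the double series converges absolutely. -/
/-!
Grouping the double series along the antidiagonals `k + r = n` turns the inner sum
`∑_{r ≤ n} 2^r` into `2^(n+1) - 1`, and `(2^(n+1) - 1) (λ - μ)^(n+1) t^((n+1)ρ)` is the difference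
of the `(n+1)`-st terms of the two Mittag-Leffler series, whose constant terms cancel.
Absolute convergence comes from the ratio test, with `Γ(s + ρ) ≥ Γ(s) (s - 1)^ρ` from the
log-convexity of `Γ`.
-/

open MeasureTheory Real

/-- Two-parameter Mittag-Leffler function. -/
noncomputable def ml2 (ρ δ x : ℝ) : ℝ := ∑' k : ℕ, x ^ k / Real.Gamma ((k : ℝ) * ρ + δ)

open Filter Finset

namespace Real

theorem Gamma_mul_sub_one_rpow_le_Gamma_add {s ρ : ℝ} (hs : 1 < s) (hρ : 0 < ρ) :
    Gamma s * (s - 1) ^ ρ ≤ Gamma (s + ρ) := by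
  have hs1 : 0 < s - 1 := sub_pos.mpr hs
  have hslope := convexOn_log_Gamma.slope_mono_adjacent (Set.mem_Ioi.mpr hs1)
    (Set.mem_Ioi.mpr (by linarith : 0 < s + ρ)) (sub_one_lt s) (lt_add_of_pos_right s hρ)
  simp only [Function.comp_apply, sub_sub_cancel, div_one, add_sub_cancel_left,
    le_div_iff₀ hρ] at hslope
  have hrec : log (Gamma s) = log (s - 1) + log (Gamma (s - 1)) := by
    rw [← log_mul hs1.ne' (Gamma_pos_of_pos hs1).ne', ← Gamma_add_one hs1.ne', sub_add_cancel]
  rw [hrec, add_sub_cancel_right] at hslope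
  have hΓs := Gamma_pos_of_pos (hs1.trans (sub_one_lt s))
  rw [← log_le_log_iff (by positivity) (Gamma_pos_of_pos (by linarith)),
    log_mul hΓs.ne' (by positivity), log_rpow hs1]
  linarith

end Real

theorem summable_pow_div_Gamma_mul_add {ρ : ℝ} (hρ : 0 < ρ) (y b : ℝ) :
    Summable fun n : ℕ => y ^ n / Real.Gamma (n * ρ + b) := by
  have hlin : Tendsto (fun n : ℕ => (n : ℝ) * ρ + (b - 1)) atTop atTop :=
    tendsto_atTop_add_const_right _ _ (tendsto_natCast_atTop_atTop.atTop_mul_const hρ)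
  refine summable_of_ratio_norm_eventually_le (r := 2⁻¹) (by norm_num) ?_
  filter_upwards [hlin.eventually_gt_atTop 0,
    ((tendsto_rpow_atTop hρ).comp hlin).eventually_ge_atTop (2 * |y|)] with n hs hy
  set s := (n : ℝ) * ρ + b
  have hs1 : s - 1 = (n : ℝ) * ρ + (b - 1) := by ring
  rw [Function.comp_apply, ← hs1] at hy
  rw [← hs1] at hs
  have hΓ : 0 < Real.Gamma s := Real.Gamma_pos_of_pos (by linarith)
  have hΓ' : 0 < Real.Gamma (s + ρ) := Real.Gamma_pos_of_pos (by linarith)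
  have hΓρ : Real.Gamma s * (2 * |y|) ≤ Real.Gamma (s + ρ) :=
    (mul_le_mul_of_nonneg_left hy hΓ.le).trans
      (Real.Gamma_mul_sub_one_rpow_le_Gamma_add (by linarith) hρ)
  have hnext : ((n + 1 : ℕ) : ℝ) * ρ + b = s + ρ := by push_cast; ring
  rw [hnext, norm_div, norm_div, Real.norm_of_nonneg hΓ.le, Real.norm_of_nonneg hΓ'.le,
    norm_pow, norm_pow, Real.norm_eq_abs, div_le_iff₀ hΓ']
  calc |y| ^ (n + 1) = 2⁻¹ * (|y| ^ n / Real.Gamma s) * (Real.Gamma s * (2 * |y|)) := by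
        field_simp; ring
    _ ≤ 2⁻¹ * (|y| ^ n / Real.Gamma s) * Real.Gamma (s + ρ) := by gcongr

theorem summable_of_summable_sum_antidiagonal {A : Type*} [AddCommMonoid A] [HasAntidiagonal A]
    {f : A × A → ℝ} (hf : ∀ p, 0 ≤ f p) (h : Summable fun n => ∑ p ∈ antidiagonal n, f p) :
    Summable f := by
  rw [← HasAntidiagonal.sigmaAntidiagonalEquivProd.summable_iff]
  refine (summable_sigma_of_nonneg fun _ => hf _).mpr ⟨fun _ => .of_finite, ?_⟩
  simpa only [tsum_fintype, HasAntidiagonal.sigmaAntidiagonalEquivProd_apply,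
    Function.comp_apply, Finset.sum_coe_sort] using h

theorem Summable.tsum_prod_eq_tsum_sum_antidiagonal {α A : Type*} [AddCommMonoid α]
    [TopologicalSpace α] [ContinuousAdd α] [T3Space α] [AddCommMonoid A] [HasAntidiagonal A]
    {f : A × A → α} (hf : Summable f) :
    ∑' p, f p = ∑' n, ∑ p ∈ antidiagonal n, f p := by
  rw [← HasAntidiagonal.sigmaAntidiagonalEquivProd.tsum_eq]
  refine ((HasAntidiagonal.sigmaAntidiagonalEquivProd.summable_iff.mpr hf).tsum_sigma'
    fun _ => .of_finite).trans ?_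
  simp only [tsum_fintype, Function.comp_apply, HasAntidiagonal.sigmaAntidiagonalEquivProd_apply,
    Finset.sum_coe_sort]

theorem sum_antidiagonal_two_pow_mul {R : Type*} [CommRing R] (g : ℕ → R) (n : ℕ) :
    ∑ p ∈ antidiagonal n, 2 ^ p.2 * g (p.1 + p.2) = (2 ^ (n + 1) - 1) * g n := by
  have hgeom : ∑ i ∈ range (n + 1), (2 : R) ^ i = 2 ^ (n + 1) - 1 := by
    have h := geom_sum_mul (2 : R) (n + 1)
    rwa [show (2 : R) - 1 = 1 by norm_num, mul_one] at h
  rw [Finset.sum_congr rfl fun p hp => by rw [mem_antidiagonal.mp hp], ← Finset.sum_mul,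
    ← Finset.Nat.sum_antidiagonal_swap]
  simp only [Prod.snd_swap, Finset.Nat.sum_antidiagonal_eq_sum_range_succ_mk, hgeom]

theorem summable_abs_two_pow_mul_comp_add {g : ℕ → ℝ} (hg : Summable fun n => 2 ^ n * |g n|) :
    Summable fun p : ℕ × ℕ => |2 ^ p.2 * g (p.1 + p.2)| := by
  refine summable_of_summable_sum_antidiagonal (fun _ => abs_nonneg _) ?_
  simp only [abs_mul, abs_pow, abs_two, sum_antidiagonal_two_pow_mul (fun n => |g n|)]
  refine .of_nonneg_of_le (fun n => mul_nonneg ?_ (abs_nonneg _)) (fun n => ?_) (hg.mul_left 2)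
  · linarith [one_le_pow₀ (M₀ := ℝ) one_le_two (n := n + 1)]
  · rw [← mul_assoc, ← pow_succ']
    exact mul_le_mul_of_nonneg_right (sub_le_self _ zero_le_one) (abs_nonneg _)

theorem tsum_tsum_two_pow_mul_comp_add {g : ℕ → ℝ}
    (hg : Summable fun p : ℕ × ℕ => 2 ^ p.2 * g (p.1 + p.2)) :
    ∑' (k : ℕ) (r : ℕ), 2 ^ r * g (k + r) = ∑' n : ℕ, (2 ^ (n + 1) - 1) * g n := by
  rw [← hg.tsum_prod' hg.prod_factor, hg.tsum_prod_eq_tsum_sum_antidiagonal]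
  simp only [sum_antidiagonal_two_pow_mul]

theorem ml2_sub_ml2 {ρ : ℝ} (hρ : 0 < ρ) (δ a b : ℝ) :
    ml2 ρ δ a - ml2 ρ δ b =
      ∑' n : ℕ, (a ^ (n + 1) - b ^ (n + 1)) / Real.Gamma (((n + 1 : ℕ) : ℝ) * ρ + δ) := by
  have hsummable (z : ℝ) := summable_pow_div_Gamma_mul_add hρ z δ
  have hshifted (z : ℝ) := (summable_nat_add_iff 1).mpr (hsummable z)
  rw [ml2, ml2, (hsummable a).tsum_eq_zero_add, (hsummable b).tsum_eq_zero_add, pow_zero, pow_zero,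
    add_sub_add_left_eq_sub, ← (hshifted a).tsum_sub (hshifted b)]
  exact tsum_congr fun n => (sub_div _ _ _).symm

theorem stmt4_general (lam mu ρ t : ℝ) (hne : lam ≠ mu)
    (hρ : 0 < ρ) (ht : 0 ≤ t) :
    (Summable fun p : ℕ × ℕ =>
      |2 ^ p.2 * (lam - mu) ^ (p.1 + p.2) * t ^ (((p.1 + p.2 + 1 : ℕ) : ℝ) * ρ)
        / Real.Gamma (((p.1 + p.2 + 1 : ℕ) : ℝ) * ρ + 1)|) ∧
    2 * lam * ∑' (k : ℕ) (r : ℕ),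
        2 ^ r * (lam - mu) ^ (k + r) * t ^ (((k + r + 1 : ℕ) : ℝ) * ρ)
          / Real.Gamma (((k + r + 1 : ℕ) : ℝ) * ρ + 1)
      = (2 * lam / (lam - mu)) *
          (ml2 ρ 1 (2 * (lam - mu) * t ^ ρ) - ml2 ρ 1 ((lam - mu) * t ^ ρ)) := by
  set c := lam - mu
  have hc : c ≠ 0 := sub_ne_zero.mpr hne
  set g : ℕ → ℝ := fun n =>
    c ^ n * t ^ (((n + 1 : ℕ) : ℝ) * ρ) / Real.Gamma (((n + 1 : ℕ) : ℝ) * ρ + 1)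
  have hterm (k r : ℕ) : 2 ^ r * c ^ (k + r) * t ^ (((k + r + 1 : ℕ) : ℝ) * ρ)
      / Real.Gamma (((k + r + 1 : ℕ) : ℝ) * ρ + 1) = 2 ^ r * g (k + r) := by
    simp only [g, mul_div_assoc, mul_assoc]
  have hpow (n : ℕ) : t ^ (((n + 1 : ℕ) : ℝ) * ρ) = (t ^ ρ) ^ (n + 1) := by
    rw [mul_comm, Real.rpow_mul_natCast ht]
  have hΓ (n : ℕ) : ((n + 1 : ℕ) : ℝ) * ρ + 1 = n * ρ + (ρ + 1) := by push_cast; ring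
  have hg : Summable fun n => 2 ^ n * |g n| := by
    refine ((summable_pow_div_Gamma_mul_add hρ (2 * |c| * t ^ ρ) (ρ + 1)).mul_left (t ^ ρ)).congr
      fun n => ?_
    have hX := Real.rpow_nonneg ht ρ
    simp only [g, hpow, hΓ, abs_div, abs_mul, abs_pow, abs_of_nonneg hX,
      abs_of_pos (Real.Gamma_pos_of_pos (by positivity : 0 < (n : ℝ) * ρ + (ρ + 1)))]
    ring
  have habs := summable_abs_two_pow_mul_comp_add hg
  simp only [hterm]
  refine ⟨habs, ?_⟩
  calc 2 * lam * ∑' (k : ℕ) (r : ℕ), 2 ^ r * g (k + r)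
      = 2 * lam / c * ∑' n : ℕ, c * ((2 ^ (n + 1) - 1) * g n) := by
        rw [tsum_tsum_two_pow_mul_comp_add habs.of_abs, tsum_mul_left]
        field_simp
    _ = _ := by
        rw [ml2_sub_ml2 hρ]
        congr 1
        refine tsum_congr fun n => ?_
        simp only [g, hpow, mul_pow]
        ring

theorem stmt4 (lam mu ρ t : ℝ) (hlam : 0 < lam) (hmu : 0 < mu) (hne : lam ≠ mu)
    (hρ : 0 < ρ) (hρ1 : ρ ≤ 1) (ht : 0 ≤ t) :
    (Summable fun p : ℕ × ℕ =>
      |2 ^ p.2 * (lam - mu) ^ (p.1 + p.2) * t ^ (((p.1 + p.2 + 1 : ℕ) : ℝ) * ρ)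
        / Real.Gamma (((p.1 + p.2 + 1 : ℕ) : ℝ) * ρ + 1)|) ∧
    2 * lam * ∑' (k : ℕ) (r : ℕ),
        2 ^ r * (lam - mu) ^ (k + r) * t ^ (((k + r + 1 : ℕ) : ℝ) * ρ)
          / Real.Gamma (((k + r + 1 : ℕ) : ℝ) * ρ + 1)
      = (2 * lam / (lam - mu)) *
          (ml2 ρ 1 (2 * (lam - mu) * t ^ ρ) - ml2 ρ 1 ((lam - mu) * t ^ ρ)) :=
  stmt4_general lam mu ρ t hne hρ ht
end

section
/- Let 0 < λ < μ and a > 0. Then ∫_0^∞ ( (μ − μ e^{(λ−μ)x}) / (μ − λ e^{(λ−μ)x}) ) e^{-ax} dx = 1/a − (μ/λ − 1) Σ_{k=1}^∞ (λ/μ)^k / ( k(μ − λ) + a ). -/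
/-!
With `q = exp ((λ - μ) x) ∈ (0, 1]` and `r = λ / μ < 1`, the extinction probability is
`(1 - q) / (1 - r q) = 1 - (μ / λ - 1) ∑_{k ≥ 1} (r q)^k`, so multiplied by `e^{-ax}` it is a series
of decaying exponentials `e^{-(k (μ - λ) + a) x}` whose coefficients are absolutely summable.
Integrating term by term, each exponential contributes `1 / (k (μ - λ) + a)`.
-/

open MeasureTheory Real Set

theorem hasSum_integral_Ioi_exp_series {ι : Type*} [Countable ι] {c b : ι → ℝ} {F : ℝ → ℝ}
    (hb : ∀ i, 0 < b i) (hF : ∀ x ∈ Ioi 0, HasSum (fun i ↦ c i * exp (-b i * x)) (F x))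
    (hsum : Summable fun i ↦ |c i| / b i) :
    HasSum (fun i ↦ c i / b i) (∫ x in Ioi 0, F x) := by
  have hexp (i : ι) : ∫ x in Ioi 0, exp (-b i * x) = 1 / b i := by
    rw [integral_exp_mul_Ioi (neg_neg_of_pos (hb i)), mul_zero, exp_zero, neg_div_neg_eq]
  have hint (i : ι) : ∫ x in Ioi 0, c i * exp (-b i * x) = c i / b i := by
    rw [integral_const_mul, hexp, mul_one_div]
  have hint_norm (i : ι) : ∫ x in Ioi 0, ‖c i * exp (-b i * x)‖ = |c i| / b i := by
    simp_rw [norm_mul, norm_of_nonneg (exp_pos _).le, integral_const_mul, hexp,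
      Real.norm_eq_abs, mul_one_div]
  rw [setIntegral_congr_fun measurableSet_Ioi fun x hx ↦ (hF x hx).tsum_eq.symm]
  have htermwise := hasSum_integral_of_summable_integral_norm
    (fun i ↦ (integrableOn_exp_mul_Ioi (neg_neg_of_pos (hb i)) 0).const_mul (c i))
    (by simpa only [hint_norm] using hsum)
  simpa only [hint] using htermwise

noncomputable def extinctionProb (lam mu x : ℝ) : ℝ :=
  (mu - mu * exp ((lam - mu) * x)) / (mu - lam * exp ((lam - mu) * x))

theorem hasSum_one_sub_extinctionProb {lam mu x : ℝ} (hlam : 0 < lam) (hmu : lam < mu)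
    (hx : 0 ≤ x) :
    HasSum (fun k : ℕ ↦ (mu / lam - 1) * (lam / mu) ^ (k + 1) * exp (-((k + 1) * (mu - lam)) * x))
      (1 - extinctionProb lam mu x) := by
  have hmu0 : 0 < mu := hlam.trans hmu
  set q := exp ((lam - mu) * x) with hq
  have hq1 : q ≤ 1 := exp_le_one_iff.mpr (mul_nonpos_of_nonpos_of_nonneg (by linarith) hx)
  have hrq : lam / mu * q < 1 :=
    calc lam / mu * q ≤ lam / mu := mul_le_of_le_one_right (div_pos hlam hmu0).le hq1
      _ < 1 := (div_lt_one hmu0).mpr hmu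
  have hden : mu - q * lam ≠ 0 := by
    have : q * lam < mu := by rwa [div_mul_eq_mul_div, div_lt_one hmu0, mul_comm] at hrq
    linarith
  have hsurvival : 1 - extinctionProb lam mu x
      = (mu / lam - 1) * (lam / mu * q) * (1 - lam / mu * q)⁻¹ := by
    rw [extinctionProb, ← hq]
    field_simp
    ring
  have hterm (k : ℕ) : exp (-((k + 1) * (mu - lam)) * x) = q * q ^ k := by
    rw [hq, ← exp_nat_mul, ← exp_add]
    ring_nf
  rw [hsurvival]
  refine ((hasSum_geometric_of_lt_one (by positivity) hrq).mul_left _).congr_fun fun k ↦ ?_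
  rw [hterm]
  ring

/- The constant term `1` of the expansion is the `k = 0` coefficient, so that the whole integrand,
not just its non-constant part, is one exponential series. -/
noncomputable def extinctionLaplaceCoeff (lam mu : ℝ) : ℕ → ℝ
  | 0 => 1
  | k + 1 => -((mu / lam - 1) * (lam / mu) ^ (k + 1))

theorem hasSum_extinctionProb_mul_exp {lam mu x : ℝ} (hlam : 0 < lam) (hmu : lam < mu)
    (a : ℝ) (hx : 0 ≤ x) :
    HasSum (fun k : ℕ ↦ extinctionLaplaceCoeff lam mu k * exp (-(k * (mu - lam) + a) * x))
      (extinctionProb lam mu x * exp (-a * x)) := by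
  have hsurvival :=
    ((hasSum_one_sub_extinctionProb hlam hmu hx).mul_right (exp (-a * x))).neg
  rw [show extinctionProb lam mu x * exp (-a * x)
      = 1 * exp (-((0 : ℕ) * (mu - lam) + a) * x)
        + -((1 - extinctionProb lam mu x) * exp (-a * x)) by push_cast; ring_nf]
  refine HasSum.zero_add (hsurvival.congr_fun fun k ↦ ?_)
  simp only [extinctionLaplaceCoeff, mul_assoc, ← exp_add]
  push_cast
  ring_nf

theorem summable_abs_extinctionLaplaceCoeff {lam mu : ℝ} (hlam : 0 < lam) (hmu : lam < mu) :
    Summable fun k ↦ |extinctionLaplaceCoeff lam mu k| := by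
  have hr0 : 0 ≤ lam / mu := (div_pos hlam (hlam.trans hmu)).le
  have hr1 : lam / mu < 1 := (div_lt_one (hlam.trans hmu)).mpr hmu
  have hc : 0 ≤ mu / lam - 1 := by rw [sub_nonneg, one_le_div hlam]; exact hmu.le
  rw [← summable_nat_add_iff 1]
  refine ((summable_geometric_of_lt_one hr0 hr1).mul_left ((mu / lam - 1) * (lam / mu))).congr
    fun k ↦ ?_
  rw [extinctionLaplaceCoeff, abs_neg, abs_of_nonneg (mul_nonneg hc (pow_nonneg hr0 _))]
  ring

theorem stmt8 (lam mu a : ℝ) (hlam : 0 < lam) (hmu : lam < mu) (ha : 0 < a) :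
    ∫ x in Set.Ioi (0 : ℝ),
        (mu - mu * Real.exp ((lam - mu) * x)) / (mu - lam * Real.exp ((lam - mu) * x)) *
          Real.exp (-a * x)
      = 1 / a - (mu / lam - 1) *
          ∑' k : ℕ, (lam / mu) ^ (k + 1) / (((k : ℝ) + 1) * (mu - lam) + a) := by
  have ha_le (k : ℕ) : a ≤ k * (mu - lam) + a :=
    le_add_of_nonneg_left (mul_nonneg k.cast_nonneg (sub_nonneg.mpr hmu.le))
  have hsum : Summable fun k : ℕ ↦ |extinctionLaplaceCoeff lam mu k| / (k * (mu - lam) + a) :=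
    (summable_abs_extinctionLaplaceCoeff hlam hmu).div_const a |>.of_nonneg_of_le
      (fun k ↦ by positivity) fun k ↦ div_le_div_of_nonneg_left (abs_nonneg _) ha (ha_le k)
  have hlaplace := hasSum_integral_Ioi_exp_series (fun k ↦ ha.trans_le (ha_le k))
    (fun x hx ↦ hasSum_extinctionProb_mul_exp hlam hmu a (le_of_lt hx)) hsum
  change ∫ x in Ioi 0, extinctionProb lam mu x * exp (-a * x) = _
  rw [← hlaplace.tsum_eq, hlaplace.summable.tsum_eq_zero_add]
  simp only [extinctionLaplaceCoeff, neg_div, tsum_neg, mul_div_assoc, tsum_mul_left]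
  push_cast
  ring_nf
end

section
/- Let λ > μ > 0 and a > 0. Then ∫_0^∞ ( (μ − μ e^{(λ−μ)x}) / (μ − λ e^{(λ−μ)x}) ) e^{-ax} dx = μ/(λ a) − (1 − μ/λ) Σ_{k=1}^∞ (μ/λ)^k / ( k(λ − μ) + a ). -/
open MeasureTheory Real Set

lemma int_exp_aux {b : ℝ} (hb : 0 < b) :
    ∫ x in Set.Ioi (0:ℝ), Real.exp (-(b * x)) = 1 / b := by
  have h := integral_comp_mul_right_Ioi (fun x => Real.exp (-x)) 0 hb
  simp only [zero_mul, smul_eq_mul, integral_exp_neg_Ioi_zero] at h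
  calc ∫ x in Set.Ioi (0:ℝ), Real.exp (-(b * x))
      = ∫ x in Set.Ioi (0:ℝ), Real.exp (-(x * b)) := by simp_rw [mul_comm]
    _ = 1 / b := by rw [h]; ring

lemma int_exp_aux' {b : ℝ} (hb : 0 < b) :
    IntegrableOn (fun x => Real.exp (-(b * x))) (Set.Ioi (0:ℝ)) := by
  simpa [neg_mul] using exp_neg_integrableOn_Ioi 0 hb

theorem stmt9 (lam mu a : ℝ) (hmu : 0 < mu) (hlam : mu < lam) (ha : 0 < a) :
    ∫ x in Set.Ioi (0 : ℝ),
        (mu - mu * Real.exp ((lam - mu) * x)) / (mu - lam * Real.exp ((lam - mu) * x)) *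
          Real.exp (-a * x)
      = mu / (lam * a) - (1 - mu / lam) *
          ∑' k : ℕ, (mu / lam) ^ (k + 1) / (((k : ℝ) + 1) * (lam - mu) + a) := by
  have hlam0 : 0 < lam := hmu.trans hlam
  set r : ℝ := mu / lam with hr_def
  set d : ℝ := lam - mu with hd_def
  have hd : 0 < d := sub_pos.mpr hlam
  have hr0 : 0 < r := div_pos hmu hlam0
  have hr1 : r < 1 := (div_lt_one hlam0).mpr hlam
  set F : ℕ → ℝ → ℝ := fun k x =>
    r ^ (k + 1) * (Real.exp (-(((k : ℝ) * d + a) * x)) - Real.exp (-((((k : ℝ) + 1) * d + a) * x)))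
    with hF_def
  have hc1 : ∀ k : ℕ, (0:ℝ) < (k : ℝ) * d + a := fun k =>
    add_pos_of_nonneg_of_pos (mul_nonneg (Nat.cast_nonneg k) hd.le) ha
  have hc2 : ∀ k : ℕ, (0:ℝ) < ((k : ℝ) + 1) * d + a := fun k =>
    add_pos (mul_pos (by positivity) hd) ha
  -- integrability of each F k
  have hFint : ∀ k : ℕ, IntegrableOn (F k) (Set.Ioi (0:ℝ)) := by
    intro k
    exact (((int_exp_aux' (hc1 k)).sub (int_exp_aux' (hc2 k))).const_mul _)
  -- value of each integral
  have hFval : ∀ k : ℕ, ∫ x in Set.Ioi (0:ℝ), F k x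
      = r ^ (k + 1) * (1 / ((k : ℝ) * d + a) - 1 / (((k : ℝ) + 1) * d + a)) := by
    intro k
    simp only [hF_def]
    rw [MeasureTheory.integral_const_mul, integral_sub (int_exp_aux' (hc1 k)) (int_exp_aux' (hc2 k)),
      int_exp_aux (hc1 k), int_exp_aux (hc2 k)]
  -- nonnegativity on Ioi 0
  have hFnonneg : ∀ k : ℕ, ∀ x ∈ Set.Ioi (0:ℝ), 0 ≤ F k x := by
    intro k x hx
    have hx0 : 0 < x := hx
    apply mul_nonneg (by positivity)
    rw [sub_nonneg]
    apply Real.exp_le_exp.mpr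
    nlinarith [hd.le]
  -- pointwise identity on Ioi 0
  have hpt : ∀ x ∈ Set.Ioi (0:ℝ),
      (mu - mu * Real.exp (d * x)) / (mu - lam * Real.exp (d * x)) * Real.exp (-a * x)
        = ∑' k, F k x := by
    intro x hx
    have hx0 : 0 < x := hx
    set u : ℝ := Real.exp (-(d * x)) with hu_def
    have hu0 : 0 < u := Real.exp_pos _
    have hu1 : u < 1 := Real.exp_lt_one_iff.mpr (by nlinarith)
    have hq1 : r * u < 1 := by nlinarith
    have hq0 : 0 ≤ r * u := by positivity
    have hFx : ∀ k : ℕ, F k x = (r * (1 - u) * Real.exp (-a * x)) * (r * u) ^ k := by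
      intro k
      have e1 : Real.exp (-(((k : ℝ) * d + a) * x)) = u ^ k * Real.exp (-a * x) := by
        rw [hu_def, ← Real.exp_nat_mul, ← Real.exp_add]; ring_nf
      have e2 : Real.exp (-((((k : ℝ) + 1) * d + a) * x)) = u ^ (k+1) * Real.exp (-a * x) := by
        rw [hu_def, ← Real.exp_nat_mul]
        push_cast
        rw [← Real.exp_add]; ring_nf
      rw [hF_def]
      simp only [e1, e2]
      rw [mul_pow, pow_succ]
      ring
    rw [tsum_congr hFx, tsum_mul_left, tsum_geometric_of_lt_one hq0 hq1]
    -- algebra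
    have hE : Real.exp (d * x) = u⁻¹ := by rw [hu_def, ← Real.exp_neg, neg_neg]
    have hden : mu - lam * Real.exp (d * x) ≠ 0 := by
      rw [hE]
      have h1 : (1:ℝ) < u⁻¹ := (one_lt_inv₀ hu0).mpr hu1
      nlinarith [mul_lt_mul_of_pos_left h1 hlam0]
    have hru : 1 - r * u ≠ 0 := by nlinarith
    rw [hE]
    have hune : u ≠ 0 := ne_of_gt hu0
    have hml : mu * u - lam ≠ 0 := by nlinarith
    have hml2 : lam - mu * u ≠ 0 := by nlinarith
    have hml3 : -(mu * u) + lam ≠ 0 := by nlinarith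
    rw [hr_def]
    field_simp [hml3]
    ring
  -- summability helpers
  set G : ℕ → ℝ := fun k => r ^ (k + 1) / ((k : ℝ) * d + a) with hG_def
  set H : ℕ → ℝ := fun k => r ^ (k + 1) / (((k : ℝ) + 1) * d + a) with hH_def
  have hbound : Summable (fun k : ℕ => r ^ k * (r * (1 / a))) :=
    (summable_geometric_of_lt_one hr0.le hr1).mul_right _
  have hGsum : Summable G := by
    apply Summable.of_nonneg_of_le (fun k => by positivity) _ hbound
    intro k
    have h1 : 1 / ((k : ℝ) * d + a) ≤ 1 / a :=
      one_div_le_one_div_of_le ha (by nlinarith [hc1 k, mul_nonneg (Nat.cast_nonneg k : (0:ℝ) ≤ k) hd.le])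
    calc G k = r ^ (k+1) * (1 / ((k : ℝ) * d + a)) := by
          simp only [hG_def]; rw [div_eq_mul_one_div]
      _ ≤ r ^ (k+1) * (1 / a) := by
          apply mul_le_mul_of_nonneg_left h1 (by positivity)
      _ = r ^ k * (r * (1 / a)) := by ring
  have hHsum : Summable H := by
    apply Summable.of_nonneg_of_le (fun k => by positivity) _ hbound
    intro k
    have h1 : 1 / (((k : ℝ) + 1) * d + a) ≤ 1 / a :=
      one_div_le_one_div_of_le ha (by nlinarith [hc2 k, mul_nonneg (by positivity : (0:ℝ) ≤ (k:ℝ)+1) hd.le])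
    calc H k = r ^ (k+1) * (1 / (((k : ℝ) + 1) * d + a)) := by
          simp only [hH_def]; rw [div_eq_mul_one_div]
      _ ≤ r ^ (k+1) * (1 / a) := by
          apply mul_le_mul_of_nonneg_left h1 (by positivity)
      _ = r ^ k * (r * (1 / a)) := by ring
  have hvalGH : ∀ k : ℕ, ∫ x in Set.Ioi (0:ℝ), F k x = G k - H k := by
    intro k
    rw [hFval k, hG_def, hH_def]
    simp only []
    ring
  have hnorm : Summable (fun k : ℕ => ∫ x in Set.Ioi (0:ℝ), ‖F k x‖) := by
    have heq : ∀ k : ℕ, (∫ x in Set.Ioi (0:ℝ), ‖F k x‖) = G k - H k := by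
      intro k
      rw [← hvalGH k]
      exact setIntegral_congr_fun measurableSet_Ioi
        (fun x hx => Real.norm_of_nonneg (hFnonneg k x hx))
    rw [funext heq]
    exact hGsum.sub hHsum
  have hswap := integral_tsum_of_summable_integral_norm
    (F := F) (μ := MeasureTheory.volume.restrict (Set.Ioi (0:ℝ))) hFint hnorm
  rw [setIntegral_congr_fun measurableSet_Ioi hpt, ← hswap, tsum_congr hvalGH,
    Summable.tsum_sub hGsum hHsum]
  -- shift the index of G
  have hGshift : ∑' k, G k = mu / (lam * a) + r * ∑' k, H k := by
    rw [Summable.tsum_eq_zero_add hGsum]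
    congr 1
    · rw [hG_def]; simp only []; push_cast
      rw [hr_def]; ring
    · rw [← tsum_mul_left]
      apply tsum_congr
      intro k
      rw [hG_def, hH_def]
      simp only []
      push_cast
      ring
  rw [hGshift]
  ring
end

section
/- Let c > 0, 0 < q < 1, a > 0 and n ≥ 1 a natural number. Then ∫_0^∞ e^{-cx} (1 − e^{-cx})^{n−1} (1 − q e^{-cx})^{-(n+1)} e^{-ax} dx = Σ_{r=0}^∞ binom(r+n, r) q^r Σ_{m=0}^{n−1} (−1)^m binom(n−1, m) / ( a + c(r + m + 1) ), where the series over r converges absolutely. -/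
open MeasureTheory Real

private lemma exp_int13 (b : ℝ) (hb : 0 < b) :
    ∫ x in Set.Ioi (0 : ℝ), Real.exp (-(b * x)) = 1 / b := by
  have h := integral_comp_mul_left_Ioi (fun x => Real.exp (-x)) 0 hb
  simp only [mul_zero, integral_exp_neg_Ioi, neg_zero, Real.exp_zero, smul_eq_mul,
    mul_one, one_div] at h ⊢
  exact h

theorem stmt13 (c q a : ℝ) (n : ℕ) (hc : 0 < c) (hq0 : 0 < q) (hq1 : q < 1)
    (ha : 0 < a) (hn : 1 ≤ n) :
    (Summable fun r : ℕ =>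
      |((r + n).choose r : ℝ) * q ^ r *
        ∑ m ∈ Finset.range n, (-1) ^ m * ((n - 1).choose m : ℝ)
          / (a + c * ((r : ℝ) + (m : ℝ) + 1))|) ∧
    ∫ x in Set.Ioi (0 : ℝ),
        Real.exp (-c * x) * (1 - Real.exp (-c * x)) ^ (n - 1) *
          (1 - q * Real.exp (-c * x)) ^ (-((n : ℤ) + 1)) * Real.exp (-a * x)
      = ∑' r : ℕ, ((r + n).choose r : ℝ) * q ^ r *
          ∑ m ∈ Finset.range n, (-1) ^ m * ((n - 1).choose m : ℝ)
            / (a + c * ((r : ℝ) + (m : ℝ) + 1)) := by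
  obtain ⟨k, rfl⟩ : ∃ k, n = k + 1 := ⟨n - 1, by omega⟩
  simp only [Nat.add_sub_cancel]
  -- basic facts
  have hq' : ‖q‖ < 1 := by rw [Real.norm_eq_abs, abs_of_pos hq0]; exact hq1
  have hA : Summable (fun r : ℕ => ((r + (k + 1)).choose (k + 1) : ℝ) * q ^ r) :=
    summable_choose_mul_geometric_of_norm_lt_one (k + 1) hq'
  have hchoose : ∀ r : ℕ, (r + (k + 1)).choose r = (r + (k + 1)).choose (k + 1) := by
    intro r
    have h := Nat.choose_symm (Nat.le_add_right r (k + 1))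
    simpa [Nat.add_sub_cancel_left] using h.symm
  have hDpos : ∀ r m : ℕ, 0 < a + c * ((r : ℝ) + (m : ℝ) + 1) := by
    intro r m
    have : (0 : ℝ) < (r : ℝ) + (m : ℝ) + 1 := by positivity
    nlinarith
  have hcoef_nonneg : ∀ r : ℕ, (0 : ℝ) ≤ ((r + (k + 1)).choose r : ℝ) * q ^ r := by
    intro r; positivity
  -- bound on the inner finite sum
  have hSbound : ∀ r : ℕ,
      |∑ m ∈ Finset.range (k + 1), (-1) ^ m * ((k).choose m : ℝ)
          / (a + c * ((r : ℝ) + (m : ℝ) + 1))| ≤ 2 ^ k / a := by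
    intro r
    calc |∑ m ∈ Finset.range (k + 1), (-1) ^ m * ((k).choose m : ℝ)
            / (a + c * ((r : ℝ) + (m : ℝ) + 1))|
        ≤ ∑ m ∈ Finset.range (k + 1), |(-1) ^ m * ((k).choose m : ℝ)
            / (a + c * ((r : ℝ) + (m : ℝ) + 1))| := Finset.abs_sum_le_sum_abs _ _
      _ ≤ ∑ m ∈ Finset.range (k + 1), ((k).choose m : ℝ) / a := by
          refine Finset.sum_le_sum fun m _ => ?_
          rw [abs_div, abs_mul, abs_pow, abs_neg, abs_one, one_pow, one_mul,
            Nat.abs_cast, abs_of_pos (hDpos r m)]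
          refine div_le_div_of_nonneg_left (by positivity) ha ?_
          nlinarith [hDpos r m, Nat.cast_nonneg (α := ℝ) r, Nat.cast_nonneg (α := ℝ) m]
      _ = 2 ^ k / a := by
          rw [← Finset.sum_div]
          norm_cast
          rw [Nat.sum_range_choose]
  constructor
  · -- Summability part
    refine Summable.of_nonneg_of_le (fun r => abs_nonneg _) (fun r => ?_)
      (hA.mul_right (2 ^ k / a))
    rw [abs_mul, abs_of_nonneg (hcoef_nonneg r), hchoose r]
    exact mul_le_mul_of_nonneg_left (hSbound r)
      (by rw [← hchoose r]; exact hcoef_nonneg r)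
  · -- Integral part
    set e : ℝ → ℝ := fun x => Real.exp (-c * x) with he
    have hint : ∀ b : ℝ, 0 < b →
        IntegrableOn (fun x => Real.exp (-(b * x))) (Set.Ioi (0 : ℝ)) := by
      intro b hb
      simpa [neg_mul] using exp_neg_integrableOn_Ioi 0 hb
    -- binomial expansion of (1 - e x) ^ k
    have hexp : ∀ x : ℝ, (1 - e x) ^ k =
        ∑ m ∈ Finset.range (k + 1), (-1) ^ m * ((k).choose m : ℝ) * e x ^ m := by
      intro x
      rw [sub_eq_add_neg, add_comm, add_pow]
      refine Finset.sum_congr rfl fun m _ => ?_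
      rw [one_pow, neg_pow]
      ring
    -- combining exponentials
    have key : ∀ (r m : ℕ) (x : ℝ),
        e x * e x ^ m * e x ^ r * Real.exp (-a * x)
          = Real.exp (-((a + c * ((r : ℝ) + (m : ℝ) + 1)) * x)) := by
      intro r m x
      rw [he]
      simp only
      rw [← Real.exp_nat_mul, ← Real.exp_nat_mul, ← Real.exp_add, ← Real.exp_add,
        ← Real.exp_add]
      congr 1
      ring
    have hinner : ∀ (r : ℕ) (x : ℝ),
        e x * (1 - e x) ^ k * e x ^ r * Real.exp (-a * x)
          = ∑ m ∈ Finset.range (k + 1), (-1) ^ m * ((k).choose m : ℝ) *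
              Real.exp (-((a + c * ((r : ℝ) + (m : ℝ) + 1)) * x)) := by
      intro r x
      rw [hexp x, Finset.mul_sum, Finset.sum_mul, Finset.sum_mul]
      refine Finset.sum_congr rfl fun m _ => ?_
      rw [← key r m x]
      ring
    -- integrability of the inner function for each r
    have hInt : ∀ r : ℕ, IntegrableOn
        (fun x => e x * (1 - e x) ^ k * e x ^ r * Real.exp (-a * x)) (Set.Ioi 0) := by
      intro r
      have h1 : IntegrableOn (fun x => ∑ m ∈ Finset.range (k + 1),
          (-1) ^ m * ((k).choose m : ℝ) *
            Real.exp (-((a + c * ((r : ℝ) + (m : ℝ) + 1)) * x))) (Set.Ioi 0) :=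
        integrable_finset_sum _ fun m _ => ((hint _ (hDpos r m)).const_mul _)
      exact h1.congr_fun (fun x _ => (hinner r x).symm) measurableSet_Ioi
    -- value of the inner integral
    have hIr : ∀ r : ℕ,
        ∫ x in Set.Ioi (0 : ℝ), e x * (1 - e x) ^ k * e x ^ r * Real.exp (-a * x)
          = ∑ m ∈ Finset.range (k + 1), (-1) ^ m * ((k).choose m : ℝ)
              / (a + c * ((r : ℝ) + (m : ℝ) + 1)) := by
      intro r
      rw [setIntegral_congr_fun measurableSet_Ioi (fun x _ => hinner r x),
        integral_finset_sum _ (fun m _ => ((hint _ (hDpos r m)).const_mul _))]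
      refine Finset.sum_congr rfl fun m _ => ?_
      rw [integral_const_mul, exp_int13 _ (hDpos r m), mul_one_div]
    -- the full functions F r
    set F : ℕ → ℝ → ℝ := fun r x => ((r + (k + 1)).choose r : ℝ) * q ^ r *
      (e x * (1 - e x) ^ k * e x ^ r * Real.exp (-a * x)) with hF
    have hFInt : ∀ r, IntegrableOn (F r) (Set.Ioi 0) := fun r =>
      (hInt r).const_mul _
    -- bound the norm integrals
    have hptbound : ∀ r : ℕ, ∀ x ∈ Set.Ioi (0 : ℝ),
        ‖F r x‖ ≤ ((r + (k + 1)).choose (k + 1) : ℝ) * q ^ r * Real.exp (-(a * x)) := by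
      intro r x hx
      have hx0 : (0 : ℝ) < x := hx
      have he1 : e x < 1 := by
        rw [he]; exact Real.exp_lt_one_iff.2 (by nlinarith)
      have he0 : 0 < e x := Real.exp_pos _
      have h1 : |e x| ≤ 1 := by rw [abs_of_pos he0]; exact he1.le
      have h2 : |1 - e x| ≤ 1 := abs_le.2 ⟨by linarith, by linarith⟩
      rw [hF]
      simp only [Real.norm_eq_abs]
      rw [abs_mul, abs_of_nonneg (hcoef_nonneg r), hchoose r]
      refine mul_le_mul_of_nonneg_left ?_ (by rw [← hchoose r]; exact hcoef_nonneg r)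
      calc |e x * (1 - e x) ^ k * e x ^ r * Real.exp (-a * x)|
          = |e x| * |1 - e x| ^ k * |e x| ^ r * |Real.exp (-a * x)| := by
            rw [abs_mul, abs_mul, abs_mul, abs_pow, abs_pow]
        _ ≤ 1 * 1 ^ k * 1 ^ r * |Real.exp (-a * x)| := by gcongr
        _ = Real.exp (-(a * x)) := by
            rw [one_pow, one_pow, one_mul, one_mul, one_mul,
              abs_of_pos (Real.exp_pos _), neg_mul]
    have hnormInt : ∀ r : ℕ, ∫ x in Set.Ioi (0 : ℝ), ‖F r x‖
        ≤ ((r + (k + 1)).choose (k + 1) : ℝ) * q ^ r * (1 / a) := by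
      intro r
      have h1 : ∫ x in Set.Ioi (0 : ℝ), ‖F r x‖
          ≤ ∫ x in Set.Ioi (0 : ℝ),
              ((r + (k + 1)).choose (k + 1) : ℝ) * q ^ r * Real.exp (-(a * x)) :=
        setIntegral_mono_on (hFInt r).norm (((hint a ha).const_mul _))
          measurableSet_Ioi (hptbound r)
      calc ∫ x in Set.Ioi (0 : ℝ), ‖F r x‖ ≤ _ := h1
        _ = ((r + (k + 1)).choose (k + 1) : ℝ) * q ^ r * (1 / a) := by
            rw [integral_const_mul, exp_int13 a ha]
    have hsum_norm : Summable fun r => ∫ x in Set.Ioi (0 : ℝ), ‖F r x‖ :=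
      Summable.of_nonneg_of_le (fun r => integral_nonneg fun x => norm_nonneg _)
        hnormInt (hA.mul_right (1 / a))
    have hHS := hasSum_integral_of_summable_integral_norm
      (μ := volume.restrict (Set.Ioi 0)) (F := F) hFInt hsum_norm
    -- pointwise tsum identity
    have hpt : ∀ x ∈ Set.Ioi (0 : ℝ), (∑' r : ℕ, F r x)
        = e x * (1 - e x) ^ k *
            (1 - q * e x) ^ (-(((k + 1 : ℕ) : ℤ) + 1)) * Real.exp (-a * x) := by
      intro x hx
      have hx0 : (0 : ℝ) < x := hx
      have he1 : e x < 1 := by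
        rw [he]; exact Real.exp_lt_one_iff.2 (by nlinarith)
      have he0 : 0 < e x := Real.exp_pos _
      have hu1 : q * e x < 1 := by nlinarith
      have hu' : ‖q * e x‖ < 1 := by
        rw [Real.norm_eq_abs, abs_of_pos (by positivity)]; exact hu1
      have hgeom := hasSum_choose_mul_geometric_of_norm_lt_one (𝕜 := ℝ) (k + 1) hu'
      have hgeom2 := hgeom.mul_left (e x * (1 - e x) ^ k * Real.exp (-a * x))
      have hfun : ∀ r : ℕ, e x * (1 - e x) ^ k * Real.exp (-a * x) *
          (((r + (k + 1)).choose (k + 1) : ℝ) * (q * e x) ^ r) = F r x := by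
        intro r
        rw [hF]
        simp only
        rw [hchoose r, mul_pow]
        ring
      have hts : (∑' r : ℕ, F r x) = e x * (1 - e x) ^ k * Real.exp (-a * x) *
          (1 / (1 - q * e x) ^ (k + 1 + 1)) := by
        exact (hgeom2.congr_fun (fun r => (hfun r).symm)).tsum_eq
      rw [hts]
      have hz : (1 - q * e x) ^ (-(((k + 1 : ℕ) : ℤ) + 1))
          = 1 / (1 - q * e x) ^ (k + 1 + 1) := by
        rw [show (-((((k + 1) : ℕ) : ℤ) + 1)) = -(((k + 2 : ℕ) : ℤ)) by push_cast; ring,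
          zpow_neg, zpow_natCast, one_div]
      rw [hz]
      ring
    -- assemble
    have hLHS : ∫ x in Set.Ioi (0 : ℝ),
        Real.exp (-c * x) * (1 - Real.exp (-c * x)) ^ k *
          (1 - q * Real.exp (-c * x)) ^ (-(((k + 1 : ℕ) : ℤ) + 1)) * Real.exp (-a * x)
        = ∫ x in Set.Ioi (0 : ℝ), ∑' r : ℕ, F r x := by
      refine setIntegral_congr_fun measurableSet_Ioi fun x hx => ?_
      exact (hpt x hx).symm
    rw [hLHS, ← hHS.tsum_eq]
    refine tsum_congr fun r => ?_
    rw [hF]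
    simp only
    rw [integral_const_mul, hIr r]
end

section
/- Let α > 0, ρ' > 0, β > 0, β' > 0, g ≥ 0, γ' ≥ 0, α' > 0 and p ≥ 0. Then for every t > 0, ∫_0^t (t−s)^{ρ'−1} E_{α',ρ'}^{γ'}(β' (t−s)^{α'}) s^{p} E_{α,p+1}^{g}(-β s^α) ds = Σ_{r=0}^∞ ( (β')^{r} (γ')_r / r! ) t^{p + ρ' + r α'} E_{α, p + ρ' + r α' + 1}^{g}(-β t^α). -/
open MeasureTheory Real

/-!
Expanding both Mittag-Leffler functions, the integrand becomes the double series
`∑ c_{r,k} (t - s)^(ρ' + rα' - 1) s^(p + kα)`. Each term integrates to the Beta integral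
`Γ(ρ' + rα') Γ(p + kα + 1) / Γ(ρ' + rα' + p + kα + 1) · t^(ρ' + rα' + p + kα)`; the bound
`∫₀ᵗ (t - s)^(a - 1) s^b ds ≤ t^(a + b) / a` and the absolute convergence of both series justify
integrating termwise. For fixed `r` the Gamma factors cancel, and the sum over `k` is again a
Prabhakar function, now with second parameter `p + ρ' + rα' + 1`.
-/

open Set Filter

lemma Real.rpow_mul_Gamma_le_Gamma_add {x a : ℝ} (hx : 1 < x) (ha : 0 < a) :
    (x - 1) ^ a * Gamma x ≤ Gamma (x + a) := by
  have hx1 : 0 < x - 1 := by linarith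
  have hΓx : 0 < Gamma x := Gamma_pos_of_pos (by linarith)
  have hΓx1 : 0 < Gamma (x - 1) := Gamma_pos_of_pos hx1
  have hΓxa : 0 < Gamma (x + a) := Gamma_pos_of_pos (by linarith)
  have hlogΓ : log (Gamma x) = log (x - 1) + log (Gamma (x - 1)) := by
    rw [← log_mul hx1.ne' hΓx1.ne', ← Gamma_add_one hx1.ne', sub_add_cancel]
  have hslope := convexOn_log_Gamma.slope_mono_adjacent (x := x - 1) (y := x) (z := x + a)
    hx1 (by simp only [mem_Ioi]; linarith) (by linarith) (by linarith)
  simp only [Function.comp_apply, sub_sub_cancel, add_sub_cancel_left, div_one, hlogΓ,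
    add_sub_cancel_right] at hslope
  rw [le_div_iff₀ ha] at hslope
  rw [← exp_log hΓxa, rpow_def_of_pos hx1, ← exp_log hΓx, ← exp_add]
  exact exp_le_exp.mpr (by linarith)

lemma poch_succ (g : ℝ) (k : ℕ) : poch g (k + 1) = poch g k * (g + k) :=
  Finset.prod_range_succ _ _

lemma poch_nonneg {g : ℝ} (hg : 0 ≤ g) (k : ℕ) : 0 ≤ poch g k :=
  Finset.prod_nonneg fun _ _ => by positivity

lemma abs_poch_le (g : ℝ) (k : ℕ) : |poch g k| ≤ poch |g| k := by
  rw [poch, Finset.abs_prod]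
  exact Finset.prod_le_prod (fun _ _ => abs_nonneg _)
    fun i _ => (abs_add_le _ _).trans (by simp)

noncomputable def mlCoeff (a b g : ℝ) (k : ℕ) : ℝ :=
  poch g k / (Gamma (k * a + b) * k.factorial)

lemma ml3_eq_tsum (a b g x : ℝ) : ml3 a b g x = ∑' k, mlCoeff a b g k * x ^ k := by
  simp only [ml3, mlCoeff, div_mul_eq_mul_div]

section Coeff

variable {a b g : ℝ}

lemma Gamma_mul_add_pos (ha : 0 < a) (hb : 0 < b) (k : ℕ) : 0 < Gamma (k * a + b) :=
  Gamma_pos_of_pos (by positivity)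

lemma mlCoeff_nonneg (ha : 0 < a) (hb : 0 < b) (hg : 0 ≤ g) (k : ℕ) : 0 ≤ mlCoeff a b g k :=
  div_nonneg (poch_nonneg hg k) (mul_pos (Gamma_mul_add_pos ha hb k) (by positivity)).le

lemma abs_mlCoeff_le (ha : 0 < a) (hb : 0 < b) (k : ℕ) :
    |mlCoeff a b g k| ≤ mlCoeff a b |g| k := by
  have hden := mul_pos (Gamma_mul_add_pos ha hb k) (Nat.cast_pos.mpr k.factorial_pos)
  rw [mlCoeff, mlCoeff, abs_div, abs_of_pos hden]
  exact div_le_div_of_nonneg_right (abs_poch_le g k) hden.le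

lemma mlCoeff_succ (ha : 0 < a) (hb : 0 < b) (k : ℕ) :
    mlCoeff a b g (k + 1) =
      mlCoeff a b g k * ((g + k) / (k + 1) * (Gamma (k * a + b) / Gamma (k * a + b + a))) := by
  have := Gamma_mul_add_pos ha hb k
  have := Gamma_pos_of_pos (by positivity : 0 < k * a + b + a)
  rw [mlCoeff, mlCoeff, poch_succ, Nat.factorial_succ]
  push_cast
  rw [show ((k : ℝ) + 1) * a + b = k * a + b + a by ring]
  field_simp

/-- The ratio of consecutive terms is `O(k^{-a})`, by log-convexity of `Γ`. -/
lemma summable_mlCoeff_mul_pow_of_nonneg (ha : 0 < a) (hb : 0 < b) (hg : 0 ≤ g) {x : ℝ}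
    (hx : 0 ≤ x) : Summable fun k => mlCoeff a b g k * x ^ k := by
  refine summable_of_ratio_norm_eventually_le (r := 1 / 2) (by norm_num) ?_
  have hlin : Tendsto (fun k : ℕ => (k : ℝ) * a + b - 1) atTop atTop :=
    tendsto_atTop_add_const_right _ _ <| tendsto_atTop_add_const_right _ _ <|
      tendsto_natCast_atTop_atTop.atTop_mul_const ha
  filter_upwards [((tendsto_rpow_atTop ha).comp hlin).eventually_ge_atTop (2 * (g + 1) * x),
    hlin.eventually_gt_atTop 0] with k hR hpos
  simp only [Function.comp_apply] at hR
  have hR0 : 0 < (k * a + b - 1) ^ a := rpow_pos_of_pos hpos a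
  have hΓle : Gamma (k * a + b) / Gamma (k * a + b + a) ≤ ((k * a + b - 1) ^ a)⁻¹ := by
    rw [div_le_iff₀ (Gamma_pos_of_pos (by positivity)), inv_mul_eq_div, le_div_iff₀ hR0,
      mul_comm]
    simpa using rpow_mul_Gamma_le_Gamma_add (by linarith) ha
  have hgk : (g + k) / (k + 1) ≤ g + 1 := by
    rw [div_le_iff₀ (by positivity)]; nlinarith
  have hratio : (g + k) / (k + 1) * (Gamma (k * a + b) / Gamma (k * a + b + a)) * x ≤ 1 / 2 :=
    calc _ ≤ (g + 1) * ((k * a + b - 1) ^ a)⁻¹ * x := by gcongr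
      _ ≤ 1 / 2 := by rw [mul_right_comm, ← div_eq_mul_inv, div_le_iff₀ hR0]; linarith
  have hterm (n : ℕ) := mul_nonneg (mlCoeff_nonneg ha hb hg n) (pow_nonneg hx n)
  rw [norm_of_nonneg (hterm _), norm_of_nonneg (hterm _), mlCoeff_succ ha hb, pow_succ]
  calc _ = mlCoeff a b g k * x ^ k *
        ((g + k) / (k + 1) * (Gamma (k * a + b) / Gamma (k * a + b + a)) * x) := by ring
    _ ≤ mlCoeff a b g k * x ^ k * (1 / 2) := mul_le_mul_of_nonneg_left hratio (hterm k)
    _ = _ := by ring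

lemma summable_norm_mlCoeff_mul_pow (ha : 0 < a) (hb : 0 < b) (x : ℝ) :
    Summable fun k => ‖mlCoeff a b g k * x ^ k‖ :=
  (summable_mlCoeff_mul_pow_of_nonneg ha hb (abs_nonneg g) (abs_nonneg x)).of_nonneg_of_le
    (fun _ => norm_nonneg _) fun k => by
      rw [norm_mul, norm_pow, norm_eq_abs, norm_eq_abs]
      gcongr
      exact abs_mlCoeff_le ha hb k

end Coeff

section Beta

variable {x y : ℝ}

lemma ofReal_rpow_mul_one_sub_rpow {u : ℝ} (hu : u ∈ Icc (0 : ℝ) 1) :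
    ((u ^ (x - 1) * (1 - u) ^ (y - 1) : ℝ) : ℂ) =
      (u : ℂ) ^ ((x : ℂ) - 1) * (1 - (u : ℂ)) ^ ((y : ℂ) - 1) := by
  rw [Complex.ofReal_mul, Complex.ofReal_cpow hu.1, Complex.ofReal_cpow (sub_nonneg.mpr hu.2)]
  push_cast
  rfl

lemma intervalIntegrable_rpow_mul_one_sub_rpow (hx : 0 < x) (hy : 0 < y) :
    IntervalIntegrable (fun u : ℝ => u ^ (x - 1) * (1 - u) ^ (y - 1)) volume 0 1 := by
  have hre : IntegrableOn
      (fun u : ℝ => RCLike.re ((u : ℂ) ^ ((x : ℂ) - 1) * (1 - (u : ℂ)) ^ ((y : ℂ) - 1)))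
      (uIoc 0 1) :=
    (Complex.betaIntegral_convergent (u := x) (v := y) (by simpa) (by simpa)).def'.re
  refine intervalIntegrable_iff.mpr <| hre.congr_fun (fun u hu => ?_) measurableSet_uIoc
  rw [uIoc_of_le zero_le_one] at hu
  simp only [← ofReal_rpow_mul_one_sub_rpow ⟨hu.1.le, hu.2⟩]
  exact Complex.ofReal_re _

lemma integral_rpow_mul_one_sub_rpow (hx : 0 < x) (hy : 0 < y) :
    ∫ u in (0 : ℝ)..1, u ^ (x - 1) * (1 - u) ^ (y - 1) = Gamma x * Gamma y / Gamma (x + y) := by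
  have hβ : ((∫ u in (0 : ℝ)..1, u ^ (x - 1) * (1 - u) ^ (y - 1) : ℝ) : ℂ) =
      Complex.betaIntegral x y := by
    rw [← intervalIntegral.integral_ofReal, Complex.betaIntegral]
    refine intervalIntegral.integral_congr fun u hu => ?_
    rw [uIcc_of_le zero_le_one] at hu
    exact ofReal_rpow_mul_one_sub_rpow hu
  have hΓ := Complex.Gamma_mul_Gamma_eq_betaIntegral (s := x) (t := y) (by simpa) (by simpa)
  rw [← hβ, ← Complex.ofReal_add, Complex.Gamma_ofReal, Complex.Gamma_ofReal,
    Complex.Gamma_ofReal] at hΓ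
  rw [eq_div_iff (Gamma_pos_of_pos (add_pos hx hy)).ne', mul_comm]
  exact_mod_cast hΓ.symm

end Beta

section RiemannLiouville

variable {t a b : ℝ}

lemma sub_mul_rpow_mul_mul_rpow (ht : 0 < t) {u : ℝ} (hu : u ∈ Icc (0 : ℝ) 1) :
    (t - t * u) ^ (a - 1) * (t * u) ^ b =
      t ^ (a + b - 1) * (u ^ (b + 1 - 1) * (1 - u) ^ (a - 1)) := by
  rw [show t - t * u = t * (1 - u) by ring, mul_rpow ht.le (sub_nonneg.mpr hu.2),
    mul_rpow ht.le hu.1, add_sub_cancel_right, show a + b - 1 = (a - 1) + b by ring,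
    rpow_add ht]
  ring

lemma intervalIntegrable_sub_rpow_mul_rpow (ht : 0 < t) (ha : 0 < a) (hb : -1 < b) :
    IntervalIntegrable (fun s => (t - s) ^ (a - 1) * s ^ b) volume 0 t := by
  rw [← IntervalIntegrable.comp_mul_left_iff (c := t) ht.ne', zero_div, div_self ht.ne']
  refine (((intervalIntegrable_rpow_mul_one_sub_rpow (show 0 < b + 1 by linarith) ha).const_mul
    (t ^ (a + b - 1))).congr fun u hu => ?_)
  rw [uIoc_of_le zero_le_one] at hu
  exact (sub_mul_rpow_mul_mul_rpow ht ⟨hu.1.le, hu.2⟩).symm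

lemma integral_sub_rpow_mul_rpow (ht : 0 < t) (ha : 0 < a) (hb : -1 < b) :
    ∫ s in (0 : ℝ)..t, (t - s) ^ (a - 1) * s ^ b =
      Gamma a * Gamma (b + 1) / Gamma (a + b + 1) * t ^ (a + b) := by
  have hscale := intervalIntegral.integral_comp_mul_left (a := (0 : ℝ)) (b := (1 : ℝ))
    (fun s => (t - s) ^ (a - 1) * s ^ b) ht.ne'
  rw [mul_zero, mul_one, intervalIntegral.integral_congr
    (fun u hu => sub_mul_rpow_mul_mul_rpow ht (uIcc_of_le (zero_le_one' ℝ) ▸ hu)),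
    intervalIntegral.integral_const_mul,
    integral_rpow_mul_one_sub_rpow (show 0 < b + 1 by linarith) ha,
    smul_eq_mul, eq_inv_mul_iff_mul_eq₀ ht.ne'] at hscale
  have htt : t * t ^ (a + b - 1) = t ^ (a + b) := by
    rw [mul_comm, ← rpow_add_one ht.ne', sub_add_cancel]
  rw [← hscale, ← mul_assoc, htt, show b + 1 + a = a + b + 1 by ring]
  ring

lemma integral_sub_rpow_mul_rpow_le (ht : 0 < t) (ha : 0 < a) (hb : 0 ≤ b) :
    ∫ s in (0 : ℝ)..t, (t - s) ^ (a - 1) * s ^ b ≤ t ^ (a + b) / a := by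
  have hmono : ∫ s in (0 : ℝ)..t, (t - s) ^ (a - 1) * s ^ b ≤
      ∫ s in (0 : ℝ)..t, t ^ b * ((t - s) ^ (a - 1) * s ^ (0 : ℝ)) := by
    refine intervalIntegral.integral_mono_on ht.le
      (intervalIntegrable_sub_rpow_mul_rpow ht ha (by linarith))
      ((intervalIntegrable_sub_rpow_mul_rpow ht ha (by norm_num)).const_mul _) fun s hs => ?_
    rw [rpow_zero, mul_one, mul_comm]
    gcongr
    · exact rpow_nonneg (sub_nonneg.mpr hs.2) _
    · exact hs.1
    · exact hs.2
  rw [intervalIntegral.integral_const_mul,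
    integral_sub_rpow_mul_rpow (b := 0) ht ha (by norm_num), zero_add, add_zero, Gamma_one,
    mul_one, Gamma_add_one ha.ne', div_mul_cancel_right₀ (Gamma_pos_of_pos ha).ne'] at hmono
  rw [rpow_add ht]
  calc _ ≤ _ := hmono
    _ = _ := by field_simp

/-- Each term integrates to at most `|c i| * t ^ (a i + e i) / a₀`, which dominates the series of
integrals of norms. -/
theorem hasSum_integral_tsum_sub_rpow_mul_rpow {ι : Type*} [Countable ι] {a₀ : ℝ}
    {c a e : ι → ℝ} (ht : 0 < t) (ha₀ : 0 < a₀) (ha : ∀ i, a₀ ≤ a i) (he : ∀ i, 0 ≤ e i)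
    (hc : Summable fun i => |c i| * t ^ (a i + e i)) :
    HasSum (fun i => c i * (Gamma (a i) * Gamma (e i + 1) / Gamma (a i + e i + 1) *
        t ^ (a i + e i)))
      (∫ s in (0 : ℝ)..t, ∑' i, c i * ((t - s) ^ (a i - 1) * s ^ e i)) := by
  have hapos i : 0 < a i := ha₀.trans_le (ha i)
  have hker i := intervalIntegrable_sub_rpow_mul_rpow (b := e i) ht (hapos i) (by linarith [he i])
  have hnorm i : ∫ s in Ioc 0 t, ‖c i * ((t - s) ^ (a i - 1) * s ^ e i)‖ =
      |c i| * ∫ s in (0 : ℝ)..t, (t - s) ^ (a i - 1) * s ^ e i := by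
    rw [intervalIntegral.integral_of_le ht.le, ← integral_const_mul]
    refine setIntegral_congr_fun measurableSet_Ioc fun s hs => ?_
    rw [norm_mul, norm_eq_abs, norm_of_nonneg
      (mul_nonneg (rpow_nonneg (sub_nonneg.mpr hs.2) _) (rpow_nonneg hs.1.le _))]
  have hsum : Summable fun i => ∫ s in Ioc 0 t, ‖c i * ((t - s) ^ (a i - 1) * s ^ e i)‖ := by
    refine (hc.div_const a₀).of_nonneg_of_le (fun i => integral_nonneg fun _ => norm_nonneg _)
      fun i => ?_
    rw [hnorm, mul_div_assoc]
    gcongr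
    exact (integral_sub_rpow_mul_rpow_le ht (hapos i) (he i)).trans
      (div_le_div_of_nonneg_left (by positivity) ha₀ (ha i))
  have hterm i : ∫ s in Ioc 0 t, c i * ((t - s) ^ (a i - 1) * s ^ e i) =
      c i * (Gamma (a i) * Gamma (e i + 1) / Gamma (a i + e i + 1) * t ^ (a i + e i)) := by
    rw [integral_const_mul, ← intervalIntegral.integral_of_le ht.le,
      integral_sub_rpow_mul_rpow ht (hapos i) (by linarith [he i])]
  rw [intervalIntegral.integral_of_le ht.le, ← funext hterm]
  exact hasSum_integral_of_summable_integral_norm (fun i => ((hker i).const_mul (c i)).1) hsum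

end RiemannLiouville

section Expansion

variable {a b g x : ℝ}

lemma rpow_add_natCast_mul (hx : 0 < x) (c d : ℝ) (k : ℕ) :
    x ^ (c + k * d) = x ^ c * (x ^ d) ^ k := by
  rw [rpow_add hx, mul_comm (k : ℝ), rpow_mul_natCast hx.le]

lemma rpow_mul_ml3_mul_rpow (hx : 0 < x) (c d y : ℝ) :
    x ^ c * ml3 a b g (y * x ^ d) = ∑' k : ℕ, mlCoeff a b g k * y ^ k * x ^ (c + k * d) := by
  rw [ml3_eq_tsum, ← tsum_mul_left]
  congr 1 with k
  rw [rpow_add_natCast_mul hx, mul_pow]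
  ring

lemma summable_norm_mlCoeff_mul_pow_mul_rpow (ha : 0 < a) (hb : 0 < b) (hx : 0 < x)
    (c d y : ℝ) : Summable fun k : ℕ => ‖mlCoeff a b g k * y ^ k * x ^ (c + k * d)‖ := by
  refine ((summable_norm_mlCoeff_mul_pow (g := g) ha hb (y * x ^ d)).mul_left (x ^ c)).congr
    fun k => ?_
  rw [rpow_add_natCast_mul hx, norm_mul, norm_mul, norm_mul, norm_mul, norm_pow, norm_pow,
    norm_mul, norm_pow, norm_of_nonneg (rpow_nonneg hx.le c),
    norm_of_nonneg (rpow_nonneg hx.le d)]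
  ring

lemma mlCoeff_mul_Gamma {k : ℕ} (hΓ : Gamma (k * a + b) ≠ 0) :
    mlCoeff a b g k * Gamma (k * a + b) = poch g k / k.factorial := by
  rw [mlCoeff]
  field_simp

end Expansion

/-- `Γ(rα' + ρ')` cancels the denominator of the first coefficient, and the Beta quotient moves
the second coefficient's parameter from `p + 1` to `p + ρ' + rα' + 1`. -/
lemma mlCoeff_mul_mlCoeff_mul_beta_eq {α ρ' β β' g γ' α' p t : ℝ} (hα : 0 < α) (hρ' : 0 < ρ')
    (hα' : 0 < α') (hp : 0 ≤ p) (ht : 0 < t) (r k : ℕ) :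
    mlCoeff α' ρ' γ' r * β' ^ r * (mlCoeff α (p + 1) g k * (-β) ^ k) *
        (Gamma (r * α' + ρ') * Gamma (p + k * α + 1) / Gamma (r * α' + ρ' + (p + k * α) + 1) *
          t ^ (r * α' + ρ' + (p + k * α))) =
      β' ^ r * poch γ' r / r.factorial * t ^ (p + ρ' + r * α') *
        (mlCoeff α (p + ρ' + r * α' + 1) g k * (-β * t ^ α) ^ k) := by
  have hΓ₁ := Gamma_mul_add_pos hα' hρ' r
  have hΓ₂ := Gamma_mul_add_pos hα (by linarith : 0 < p + 1) k
  have hΓ₃ := Gamma_mul_add_pos hα (by positivity : 0 < p + ρ' + r * α' + 1) k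
  rw [show p + k * α + 1 = k * α + (p + 1) by ring,
    show r * α' + ρ' + (p + k * α) + 1 = k * α + (p + ρ' + r * α' + 1) by ring,
    show r * α' + ρ' + (p + k * α) = (p + ρ' + r * α') + k * α by ring,
    rpow_add_natCast_mul ht]
  have hcancel : mlCoeff α (p + 1) g k * Gamma (k * α + (p + 1)) =
      mlCoeff α (p + ρ' + r * α' + 1) g k * Gamma (k * α + (p + ρ' + r * α' + 1)) := by
    rw [mlCoeff_mul_Gamma hΓ₂.ne', mlCoeff_mul_Gamma hΓ₃.ne']
  calc _ = mlCoeff α' ρ' γ' r * Gamma (r * α' + ρ') * β' ^ r *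
        (mlCoeff α (p + 1) g k * Gamma (k * α + (p + 1)) / Gamma (k * α + (p + ρ' + r * α' + 1)))
          * t ^ (p + ρ' + r * α') * ((-β) ^ k * (t ^ α) ^ k) := by ring
    _ = _ := by
      rw [mlCoeff_mul_Gamma hΓ₁.ne', hcancel, mul_div_assoc, div_self hΓ₃.ne', mul_pow]
      ring

section DoubleSeries

variable {a b g a' b' g' : ℝ}

lemma rpow_mul_ml3_mul_rpow_mul_ml3 {x y : ℝ} (ha : 0 < a) (hb : 0 < b) (ha' : 0 < a')
    (hb' : 0 < b') (hx : 0 < x) (hy : 0 < y) (c d u c' d' v : ℝ) :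
    x ^ (c - 1) * ml3 a b g (u * x ^ d) * (y ^ c' * ml3 a' b' g' (v * y ^ d')) =
      ∑' i : ℕ × ℕ, mlCoeff a b g i.1 * u ^ i.1 * (mlCoeff a' b' g' i.2 * v ^ i.2) *
        (x ^ (i.1 * d + c - 1) * y ^ (c' + i.2 * d')) := by
  rw [rpow_mul_ml3_mul_rpow hx, rpow_mul_ml3_mul_rpow hy,
    tsum_mul_tsum_of_summable_norm (summable_norm_mlCoeff_mul_pow_mul_rpow ha hb hx _ _ _)
      (summable_norm_mlCoeff_mul_pow_mul_rpow ha' hb' hy _ _ _)]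
  congr 1 with i
  rw [show (i.1 : ℝ) * d + c - 1 = c - 1 + i.1 * d by ring]
  ring

lemma summable_abs_mlCoeff_mul_mlCoeff_mul_rpow {t : ℝ} (ha : 0 < a) (hb : 0 < b)
    (ha' : 0 < a') (hb' : 0 < b') (ht : 0 < t) (c d u c' d' v : ℝ) :
    Summable fun i : ℕ × ℕ => |mlCoeff a b g i.1 * u ^ i.1 * (mlCoeff a' b' g' i.2 * v ^ i.2)| *
      t ^ (i.1 * d + c + (c' + i.2 * d')) := by
  refine ((summable_norm_mlCoeff_mul_pow_mul_rpow (g := g) ha hb ht c d u).mul_norm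
    (summable_norm_mlCoeff_mul_pow_mul_rpow (g := g') ha' hb' ht c' d' v)).congr fun i => ?_
  rw [show (i.1 : ℝ) * d + c + (c' + i.2 * d') = (c + i.1 * d) + (c' + i.2 * d') by ring,
    rpow_add ht (c + i.1 * d)]
  simp only [norm_mul, norm_eq_abs, abs_mul, abs_of_pos (rpow_pos_of_pos ht _)]
  ring

end DoubleSeries

theorem stmt15_general (α ρ' β β' g γ' α' p : ℝ) (hα : 0 < α) (hρ' : 0 < ρ')
    (hα' : 0 < α') (hp : 0 ≤ p) :
    ∀ t > (0 : ℝ),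
      ∫ s in (0 : ℝ)..t, (t - s) ^ (ρ' - 1) * ml3 α' ρ' γ' (β' * (t - s) ^ α') *
          (s ^ p * ml3 α (p + 1) g (-β * s ^ α))
        = ∑' r : ℕ, β' ^ r * poch γ' r / (Nat.factorial r : ℝ) *
            t ^ (p + ρ' + (r : ℝ) * α') *
            ml3 α (p + ρ' + (r : ℝ) * α' + 1) g (-β * t ^ α) := by
  intro t ht
  have hp1 : 0 < p + 1 := by linarith
  rw [intervalIntegral.integral_congr_Ioo_of_le ht.le fun s hs =>
    rpow_mul_ml3_mul_rpow_mul_ml3 hα' hρ' hα hp1 (sub_pos.mpr hs.2) hs.1 ρ' α' β' p α (-β)]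
  have hsum := hasSum_integral_tsum_sub_rpow_mul_rpow ht hρ'
    (fun i => le_add_of_nonneg_left (by positivity)) (fun i => by positivity)
    (summable_abs_mlCoeff_mul_mlCoeff_mul_rpow (g := γ') (g' := g) hα' hρ' hα hp1 ht
      ρ' α' β' p α (-β))
  refine (hsum.prod_fiberwise fun r => ?_).tsum_eq.symm
  simp only [mlCoeff_mul_mlCoeff_mul_beta_eq hα hρ' hα' hp ht, ml3_eq_tsum]
  exact (summable_norm_mlCoeff_mul_pow hα (by positivity) _).of_norm.hasSum.mul_left _

theorem stmt15 (α ρ' β β' g γ' α' p : ℝ) (hα : 0 < α) (hρ' : 0 < ρ') (hβ : 0 < β)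
    (hβ' : 0 < β') (hg : 0 ≤ g) (hγ' : 0 ≤ γ') (hα' : 0 < α') (hp : 0 ≤ p) :
    ∀ t > (0 : ℝ),
      ∫ s in (0 : ℝ)..t, (t - s) ^ (ρ' - 1) * ml3 α' ρ' γ' (β' * (t - s) ^ α') *
          (s ^ p * ml3 α (p + 1) g (-β * s ^ α))
        = ∑' r : ℕ, β' ^ r * poch γ' r / (Nat.factorial r : ℝ) *
            t ^ (p + ρ' + (r : ℝ) * α') *
            ml3 α (p + ρ' + (r : ℝ) * α' + 1) g (-β * t ^ α) :=
  stmt15_general α ρ' β β' g γ' α' p hα hρ' hα' hp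
end

section
/- Let 0 < ρ ≤ 1, λ > 0, μ > 0, M > 0 and n₀ ≥ 0. Then for every t > 0, (1/t) ∫_0^t [ n₀ E_{ρ,1}(-(λ+μ) s^ρ) + (Mλ/(λ+μ)) (1 − E_{ρ,1}(-(λ+μ) s^ρ)) ] ds = ( n₀ − Mλ/(λ+μ) ) E_{ρ,2}(-(λ+μ) t^ρ) + Mλ/(λ+μ). -/
open MeasureTheory Real

/-! Integrate the Mittag-Leffler series term by term. The bound `Γ(y) ≥ R^(y-1) e^(-R)` (for
`y ≥ 1`), read off from Euler's integral restricted to `(R, ∞)`, dominates the series by a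
geometric one on bounded sets, which justifies the interchange. Each term integrates by
`∫₀ᵗ s^(kρ+δ-1) ds = t^(kρ+δ)/(kρ+δ)`, and `Γ(z+1) = z Γ(z)` turns `δ` into `δ + 1`. -/

open Set

lemma rpow_sub_one_mul_exp_neg_le_Gamma {y R : ℝ} (hy : 1 ≤ y) (hR : 0 ≤ R) :
    R ^ (y - 1) * exp (-R) ≤ Gamma y := by
  have hG := GammaIntegral_convergent (zero_lt_one.trans_le hy)
  calc R ^ (y - 1) * exp (-R) = ∫ u in Ioi R, exp (-u) * R ^ (y - 1) := by
        rw [integral_mul_const, integral_exp_neg_Ioi, mul_comm]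
    _ ≤ ∫ u in Ioi R, exp (-u) * u ^ (y - 1) :=
        setIntegral_mono_on ((integrableOn_exp_neg_Ioi R).mul_const _)
          (hG.mono_set (Ioi_subset_Ioi hR)) measurableSet_Ioi fun u hu => by
            gcongr; exact le_of_lt hu
    _ ≤ ∫ u in Ioi 0, exp (-u) * u ^ (y - 1) :=
        setIntegral_mono_set hG
          (ae_restrict_of_forall_mem measurableSet_Ioi fun u hu =>
            mul_nonneg (exp_pos _).le (rpow_nonneg (le_of_lt hu) _))
          (Ioi_subset_Ioi hR).eventuallyLE
    _ = Gamma y := (Gamma_eq_integral (zero_lt_one.trans_le hy)).symm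

lemma summable_pow_div_Gamma {ρ δ : ℝ} (hρ : 0 < ρ) (hδ : 1 ≤ δ) (x : ℝ) :
    Summable fun k : ℕ => x ^ k / Gamma (k * ρ + δ) := by
  set R := (2 * |x| + 1) ^ ρ⁻¹
  have hR : 0 ≤ R := by positivity
  have hRρ : R ^ ρ = 2 * |x| + 1 := by
    rw [← rpow_mul (by positivity), inv_mul_cancel₀ hρ.ne', rpow_one]
  have hq : |x| / (2 * |x| + 1) < 1 := by
    rw [div_lt_one (by positivity)]; linarith [abs_nonneg x]
  set c := R ^ (δ - 1) * exp (-R)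
  have hc : 0 < c := by positivity
  refine Summable.of_norm_bounded
    ((summable_geometric_of_lt_one (by positivity) hq).mul_right c⁻¹) fun k => ?_
  have hy : 1 ≤ k * ρ + δ := le_add_of_nonneg_of_le (by positivity) hδ
  have hΓ : (2 * |x| + 1) ^ k * c ≤ Gamma (k * ρ + δ) := by
    convert rpow_sub_one_mul_exp_neg_le_Gamma hy hR using 1
    rw [← hRρ, ← rpow_natCast, ← rpow_mul hR, add_sub_assoc,
      rpow_add_of_nonneg hR (by positivity) (by linarith), mul_comm ρ, mul_assoc]
  calc ‖x ^ k / Gamma (k * ρ + δ)‖ = |x| ^ k / Gamma (k * ρ + δ) := by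
        rw [norm_div, norm_pow, norm_eq_abs, norm_of_nonneg (Gamma_pos_of_pos (by linarith)).le]
    _ ≤ |x| ^ k / ((2 * |x| + 1) ^ k * c) := by gcongr
    _ = (|x| / (2 * |x| + 1)) ^ k * c⁻¹ := by rw [div_pow, mul_inv, div_eq_mul_inv]; ring

lemma norm_pow_div_Gamma_le {ρ δ x y : ℝ} (hρ : 0 ≤ ρ) (hδ : 0 < δ) (hxy : |x| ≤ y) (k : ℕ) :
    ‖x ^ k / Gamma (k * ρ + δ)‖ ≤ y ^ k / Gamma (k * ρ + δ) := by
  have hΓ : 0 < Gamma (k * ρ + δ) := Gamma_pos_of_pos (by positivity)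
  rw [norm_div, norm_pow, norm_eq_abs, norm_of_nonneg hΓ.le]
  gcongr

lemma continuous_ml2 {ρ δ : ℝ} (hρ : 0 < ρ) (hδ : 1 ≤ δ) : Continuous (ml2 ρ δ) := by
  refine continuous_iff_continuousAt.2 fun x => ?_
  have hK : ContinuousOn (ml2 ρ δ) (Icc (-(|x| + 1)) (|x| + 1)) :=
    continuousOn_tsum (fun k => ((continuous_pow k).div_const _).continuousOn)
      (summable_pow_div_Gamma hρ hδ (|x| + 1)) fun k y hy =>
        norm_pow_div_Gamma_le hρ.le (by linarith) (abs_le.2 hy) k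
  exact hK.continuousAt
    (Icc_mem_nhds (by linarith [neg_abs_le x]) (by linarith [le_abs_self x]))

lemma integral_rpow_mul_pow_div_Gamma {ρ δ t : ℝ} (hρ : 0 ≤ ρ) (hδ : 1 ≤ δ) (ht : 0 ≤ t)
    (c : ℝ) (k : ℕ) :
    ∫ s in (0 : ℝ)..t, s ^ (δ - 1) * ((c * s ^ ρ) ^ k / Gamma (k * ρ + δ)) =
      t ^ δ * ((c * t ^ ρ) ^ k / Gamma (k * ρ + (δ + 1))) := by
  have hkρ : 0 ≤ k * ρ := by positivity
  have hpow : ∀ s : ℝ, 0 ≤ s → (s ^ ρ) ^ k = s ^ (k * ρ) := fun s hs => by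
    rw [← rpow_natCast, ← rpow_mul hs, mul_comm]
  have hpos : 0 < k * ρ + δ := by linarith
  calc ∫ s in (0 : ℝ)..t, s ^ (δ - 1) * ((c * s ^ ρ) ^ k / Gamma (k * ρ + δ))
      = ∫ s in (0 : ℝ)..t, c ^ k / Gamma (k * ρ + δ) * s ^ (k * ρ + δ - 1) := by
        refine intervalIntegral.integral_congr fun s hs => ?_
        rw [uIcc_of_le ht] at hs
        obtain ⟨hs, -⟩ := hs
        rw [add_sub_assoc, rpow_add_of_nonneg hs hkρ (by linarith), mul_pow, hpow s hs]
        ring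
    _ = c ^ k / Gamma (k * ρ + δ) * (t ^ (k * ρ + δ) / (k * ρ + δ)) := by
        rw [intervalIntegral.integral_const_mul, integral_rpow (Or.inl (by linarith)),
          sub_add_cancel, zero_rpow hpos.ne', sub_zero]
    _ = t ^ δ * ((c * t ^ ρ) ^ k / Gamma (k * ρ + (δ + 1))) := by
        rw [← add_assoc, Gamma_add_one hpos.ne', rpow_add_of_nonneg ht hkρ (by linarith), mul_pow,
          hpow t ht]
        field_simp

theorem integral_rpow_mul_ml2 {ρ δ t : ℝ} (hρ : 0 < ρ) (hδ : 1 ≤ δ) (ht : 0 ≤ t) (c : ℝ) :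
    ∫ s in (0 : ℝ)..t, s ^ (δ - 1) * ml2 ρ δ (c * s ^ ρ) = t ^ δ * ml2 ρ (δ + 1) (c * t ^ ρ) := by
  have hsum : HasSum
      (fun k : ℕ => ∫ s in (0 : ℝ)..t, s ^ (δ - 1) * ((c * s ^ ρ) ^ k / Gamma (k * ρ + δ)))
      (∫ s in (0 : ℝ)..t, s ^ (δ - 1) * ml2 ρ δ (c * s ^ ρ)) := by
    refine intervalIntegral.hasSum_integral_of_dominated_convergence
      (fun k _ => t ^ (δ - 1) * ((|c| * t ^ ρ) ^ k / Gamma (k * ρ + δ)))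
      (fun k => ?_) (fun k => ae_of_all _ fun s hs => ?_)
      (ae_of_all _ fun _ _ => (summable_pow_div_Gamma hρ hδ _).mul_left _)
      intervalIntegrable_const
      (ae_of_all _ fun _ _ => (summable_pow_div_Gamma hρ hδ _).hasSum.mul_left _)
    · refine Continuous.aestronglyMeasurable ?_
      exact (continuous_rpow_const (by linarith)).mul
        (((continuous_const.mul (continuous_rpow_const hρ.le)).pow k).div_const _)
    · rw [uIoc_of_le ht] at hs
      obtain ⟨hs0, hst⟩ := hs
      have hbase : |c * s ^ ρ| ≤ |c| * t ^ ρ := by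
        rw [abs_mul, abs_of_nonneg (rpow_nonneg hs0.le _)]
        gcongr
      rw [norm_mul, norm_of_nonneg (rpow_nonneg hs0.le _)]
      gcongr
      exact norm_pow_div_Gamma_le hρ.le (by linarith) hbase k
  simp only [integral_rpow_mul_pow_div_Gamma hρ.le hδ ht] at hsum
  rw [← hsum.tsum_eq, tsum_mul_left]
  rfl

theorem integral_ml2_one {ρ t : ℝ} (hρ : 0 < ρ) (ht : 0 ≤ t) (c : ℝ) :
    ∫ s in (0 : ℝ)..t, ml2 ρ 1 (c * s ^ ρ) = t * ml2 ρ 2 (c * t ^ ρ) := by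
  simpa only [sub_self, rpow_zero, one_mul, rpow_one, one_add_one_eq_two] using
    integral_rpow_mul_ml2 hρ le_rfl ht c

theorem stmt18_general (ρ lam mu M n₀ : ℝ) (hρ : 0 < ρ) :
    ∀ t > (0 : ℝ),
      (1 / t) * ∫ s in (0 : ℝ)..t,
          (n₀ * ml2 ρ 1 (-(lam + mu) * s ^ ρ) +
            M * lam / (lam + mu) * (1 - ml2 ρ 1 (-(lam + mu) * s ^ ρ)))
        = (n₀ - M * lam / (lam + mu)) * ml2 ρ 2 (-(lam + mu) * t ^ ρ)
          + M * lam / (lam + mu) := by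
  intro t ht
  set C := M * lam / (lam + mu)
  have hE : IntervalIntegrable (fun s => ml2 ρ 1 (-(lam + mu) * s ^ ρ)) volume 0 t :=
    ((continuous_ml2 hρ le_rfl).comp
      (continuous_const.mul (continuous_rpow_const hρ.le))).intervalIntegrable _ _
  simp_rw [show ∀ x : ℝ, n₀ * x + C * (1 - x) = (n₀ - C) * x + C from fun x => by ring]
  rw [intervalIntegral.integral_add (hE.const_mul _) intervalIntegrable_const,
    intervalIntegral.integral_const_mul, integral_ml2_one hρ ht.le, intervalIntegral.integral_const,
    smul_eq_mul, sub_zero]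
  field_simp

theorem stmt18 (ρ lam mu M n₀ : ℝ) (hρ : 0 < ρ) (hρ1 : ρ ≤ 1) (hlam : 0 < lam)
    (hmu : 0 < mu) (hM : 0 < M) (hn₀ : 0 ≤ n₀) :
    ∀ t > (0 : ℝ),
      (1 / t) * ∫ s in (0 : ℝ)..t,
          (n₀ * ml2 ρ 1 (-(lam + mu) * s ^ ρ) +
            M * lam / (lam + mu) * (1 - ml2 ρ 1 (-(lam + mu) * s ^ ρ)))
        = (n₀ - M * lam / (lam + mu)) * ml2 ρ 2 (-(lam + mu) * t ^ ρ)
          + M * lam / (lam + mu) :=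
  stmt18_general ρ lam mu M n₀ hρ
end
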